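/- arXiv:math/0507247 — 7 statements merged into one kernel-verified Lean document; each statement's English description precedes it below -/
import Mathlib

section
/- Let n ≥ 2, let f_{jk} : 𝔹ⁿ → 𝔻 (for 2 ≤ j,k ≤ n) be holomorphic functions from the unit ball of ℂⁿ to the unit disc, and let 0 < ε < 1/(2n). Then the map ρ(z) := (z₁ + ε·Σ_{j,k=2}^n z_j z_k f_{jk}(z), 0, …, 0) is a holomorphic self-map of 𝔹ⁿ satisfying ρ∘ρ = ρ and ρ(z) = z for every z in the complex geodesic {(ζ,0,…,0) : ζ ∈ 𝔻}; i.e., ρ is a holomorphic retraction of 𝔹ⁿ onto that complex geodesic. -/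
open Metric Filter Set Topology

/-!
Write `r = |z₀|`. Since `|f_{jk}| ≤ 1`, the quadratic term is bounded by
`(Σ_{j≠0} |z_j|)² ≤ n Σ_{j≠0} |z_j|² ≤ n (1 - r²)` (Cauchy–Schwarz), so the only nonzero
coordinate of `ρ z` has modulus at most `r + εn(1 - r)(1 + r) < r + (1 - r) = 1`, as `2εn < 1`.
The quadratic term vanishes on the geodesic `{z_j = 0 for j ≠ 0}`, so `ρ` fixes it, and
`ρ∘ρ = ρ` because `ρ` takes values in it.
-/

namespace BallRetraction

variable {ι : Type*} [Fintype ι] [DecidableEq ι]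
  (i₀ : ι) (ε : ℝ) (f : ι → ι → EuclideanSpace ℂ ι → ℂ)

noncomputable def quadraticPart (z : EuclideanSpace ℂ ι) : ℂ :=
  ∑ j, ∑ k, if j ≠ i₀ ∧ k ≠ i₀ then z j * z k * f j k z else 0

noncomputable def retraction (z : EuclideanSpace ℂ ι) : EuclideanSpace ℂ ι :=
  EuclideanSpace.single i₀ (z i₀ + (ε : ℂ) * quadraticPart i₀ f z)

variable {i₀ ε f}

theorem quadraticPart_eq_sum_erase (z : EuclideanSpace ℂ ι) :
    quadraticPart i₀ f z =
      ∑ j ∈ Finset.univ.erase i₀, ∑ k ∈ Finset.univ.erase i₀, z j * z k * f j k z := by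
  simp only [quadraticPart, ← Finset.filter_ne', Finset.sum_filter, ite_and, Finset.sum_ite_irrel,
    Finset.sum_const_zero]

theorem quadraticPart_eq_zero (z : EuclideanSpace ℂ ι) (hz : ∀ i, i ≠ i₀ → z i = 0) :
    quadraticPart i₀ f z = 0 := by
  rw [quadraticPart_eq_sum_erase]
  refine Finset.sum_eq_zero fun j hj => Finset.sum_eq_zero fun k _ => ?_
  rw [hz j (Finset.ne_of_mem_erase hj), zero_mul, zero_mul]

theorem norm_quadraticPart_le (z : EuclideanSpace ℂ ι)
    (hf : ∀ j k, j ≠ i₀ → k ≠ i₀ → ‖f j k z‖ ≤ 1) :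
    ‖quadraticPart i₀ f z‖ ≤ Fintype.card ι * (‖z‖ ^ 2 - ‖z i₀‖ ^ 2) := by
  set s := Finset.univ.erase i₀
  have hsum_sq : ∑ j ∈ s, ‖z j‖ ^ 2 = ‖z‖ ^ 2 - ‖z i₀‖ ^ 2 := by
    rw [Finset.sum_erase_eq_sub (Finset.mem_univ i₀), EuclideanSpace.norm_sq_eq]
  have hcard : (s.card : ℝ) ≤ Fintype.card ι := by
    exact_mod_cast (Finset.card_erase_le).trans (Finset.card_univ).le
  calc ‖quadraticPart i₀ f z‖
      ≤ ∑ j ∈ s, ∑ k ∈ s, ‖z j‖ * ‖z k‖ := by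
        rw [quadraticPart_eq_sum_erase]
        refine (norm_sum_le _ _).trans (Finset.sum_le_sum fun j hj => ?_)
        refine (norm_sum_le _ _).trans (Finset.sum_le_sum fun k hk => ?_)
        rw [norm_mul, norm_mul]
        exact mul_le_of_le_one_right (by positivity)
          (hf j k (Finset.ne_of_mem_erase hj) (Finset.ne_of_mem_erase hk))
    _ = (∑ j ∈ s, ‖z j‖) ^ 2 := by rw [sq, Finset.sum_mul_sum]
    _ ≤ s.card * ∑ j ∈ s, ‖z j‖ ^ 2 := sq_sum_le_card_mul_sum_sq
    _ ≤ Fintype.card ι * ∑ j ∈ s, ‖z j‖ ^ 2 := by gcongr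
    _ = Fintype.card ι * (‖z‖ ^ 2 - ‖z i₀‖ ^ 2) := by rw [hsum_sq]

theorem add_mul_one_sub_sq_lt_one {r c : ℝ} (hr0 : 0 ≤ r) (hr1 : r < 1)
    (hc : 2 * c < 1) : r + c * (1 - r ^ 2) < 1 := by
  nlinarith [mul_pos (sub_pos.2 hr1) (show 0 < 1 - c * (1 + r) by nlinarith)]

theorem norm_add_mul_quadraticPart_lt_one {z : EuclideanSpace ℂ ι} (hz : ‖z‖ < 1)
    (hf : ∀ j k, j ≠ i₀ → k ≠ i₀ → ‖f j k z‖ ≤ 1) (hε0 : 0 ≤ ε)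
    (hε : 2 * (ε * Fintype.card ι) < 1) :
    ‖z i₀ + (ε : ℂ) * quadraticPart i₀ f z‖ < 1 := by
  have hcoord : ‖z i₀‖ ≤ ‖z‖ := PiLp.norm_apply_le z i₀
  calc ‖z i₀ + (ε : ℂ) * quadraticPart i₀ f z‖
      ≤ ‖z i₀‖ + ε * (Fintype.card ι * (‖z‖ ^ 2 - ‖z i₀‖ ^ 2)) := by
        refine (norm_add_le _ _).trans ?_
        gcongr
        rw [norm_mul, Complex.norm_real, Real.norm_of_nonneg hε0]
        exact mul_le_mul_of_nonneg_left (norm_quadraticPart_le z hf) hε0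
    _ ≤ ‖z i₀‖ + ε * Fintype.card ι * (1 - ‖z i₀‖ ^ 2) := by
        rw [mul_assoc]
        gcongr
        nlinarith [norm_nonneg z]
    _ < 1 := add_mul_one_sub_sq_lt_one (norm_nonneg _) (hcoord.trans_lt hz) hε

theorem differentiableOn_quadraticPart {s : Set (EuclideanSpace ℂ ι)}
    (hf : ∀ j k, j ≠ i₀ → k ≠ i₀ → DifferentiableOn ℂ (f j k) s) :
    DifferentiableOn ℂ (quadraticPart i₀ f) s := by
  have hcoord (i : ι) : DifferentiableOn ℂ (fun z : EuclideanSpace ℂ ι => z i) s :=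
    (EuclideanSpace.proj (𝕜 := ℂ) i).differentiableOn
  refine DifferentiableOn.fun_sum fun j _ => DifferentiableOn.fun_sum fun k _ => ?_
  split_ifs with hjk
  · exact ((hcoord j).mul (hcoord k)).mul (hf j k hjk.1 hjk.2)
  · exact differentiableOn_const 0

theorem retraction_apply_of_ne (z : EuclideanSpace ℂ ι) {i : ι} (hi : i ≠ i₀) :
    retraction i₀ ε f z i = 0 := by
  simp [retraction, hi]

theorem retraction_eq_self (z : EuclideanSpace ℂ ι) (hz : ∀ i, i ≠ i₀ → z i = 0) :
    retraction i₀ ε f z = z := by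
  ext i
  by_cases hi : i = i₀
  · subst hi
    simp [retraction, quadraticPart_eq_zero z hz]
  · rw [retraction_apply_of_ne z hi, hz i hi]

theorem retraction_retraction (z : EuclideanSpace ℂ ι) :
    retraction i₀ ε f (retraction i₀ ε f z) = retraction i₀ ε f z :=
  retraction_eq_self _ fun _ hi => retraction_apply_of_ne z hi

theorem differentiableOn_retraction {s : Set (EuclideanSpace ℂ ι)}
    (hf : ∀ j k, j ≠ i₀ → k ≠ i₀ → DifferentiableOn ℂ (f j k) s) :
    DifferentiableOn ℂ (retraction i₀ ε f) s := by
  have hfirst :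
      DifferentiableOn ℂ (fun z : EuclideanSpace ℂ ι => z i₀ + ε * quadraticPart i₀ f z) s :=
    (EuclideanSpace.proj i₀).differentiableOn.add
      ((differentiableOn_const _).mul (differentiableOn_quadraticPart hf))
  refine differentiableOn_euclidean.2 fun i => ?_
  by_cases hi : i = i₀
  · subst hi
    simpa [retraction] using hfirst
  · simpa only [retraction_apply_of_ne _ hi] using differentiableOn_const 0

theorem mapsTo_retraction
    (hf : ∀ j k, j ≠ i₀ → k ≠ i₀ → MapsTo (f j k) (ball 0 1) (ball 0 1)) (hε0 : 0 ≤ ε)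
    (hε : 2 * (ε * Fintype.card ι) < 1) :
    MapsTo (retraction i₀ ε f) (ball 0 1) (ball 0 1) := by
  intro z hz
  rw [mem_ball_zero_iff] at hz ⊢
  rw [retraction, PiLp.norm_single]
  refine norm_add_mul_quadraticPart_lt_one hz (fun j k hj hk => ?_) hε0 hε
  exact (mem_ball_zero_iff.1 (hf j k hj hk (mem_ball_zero_iff.2 hz))).le

end BallRetraction

/-- A holomorphic retraction of the unit ball `𝔹ⁿ ⊂ ℂⁿ` (here `n = m+2 ≥ 2`) onto the
complex geodesic `{(ζ,0,…,0)}`: given holomorphic `f_{jk} : 𝔹ⁿ → 𝔻` (for `j,k ≠ 0`) and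
`0 < ε < 1/(2n)`, the map `ρ(z) = (z₀ + ε Σ_{j,k≠0} z_j z_k f_{jk}(z), 0, …, 0)` is a
holomorphic self-map of the ball with `ρ∘ρ = ρ`, fixing the geodesic pointwise. -/
theorem stmt5 (m : ℕ)
    (f : Fin (m+2) → Fin (m+2) → EuclideanSpace ℂ (Fin (m+2)) → ℂ)
    (hf : ∀ j k : Fin (m+2), j ≠ 0 → k ≠ 0 →
      DifferentiableOn ℂ (f j k) (ball (0 : EuclideanSpace ℂ (Fin (m+2))) 1) ∧
      MapsTo (f j k) (ball (0 : EuclideanSpace ℂ (Fin (m+2))) 1) (ball (0:ℂ) 1))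
    (ε : ℝ) (hε0 : 0 < ε) (hε : ε < 1 / (2 * (m+2)))
    (ρ : EuclideanSpace ℂ (Fin (m+2)) → EuclideanSpace ℂ (Fin (m+2)))
    (hρ : ∀ z, ρ z = (WithLp.equiv 2 (Fin (m+2) → ℂ)).symm (fun i =>
      if i = 0 then
        z 0 + (ε : ℂ) * ∑ j : Fin (m+2), ∑ k : Fin (m+2),
          (if j ≠ 0 ∧ k ≠ 0 then z j * z k * f j k z else 0)
      else 0)) :
    DifferentiableOn ℂ ρ (ball (0 : EuclideanSpace ℂ (Fin (m+2))) 1) ∧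
    MapsTo ρ (ball (0 : EuclideanSpace ℂ (Fin (m+2))) 1)
      (ball (0 : EuclideanSpace ℂ (Fin (m+2))) 1) ∧
    (∀ z ∈ ball (0 : EuclideanSpace ℂ (Fin (m+2))) 1, ρ (ρ z) = ρ z) ∧
    (∀ z ∈ ball (0 : EuclideanSpace ℂ (Fin (m+2))) 1,
      (∀ i : Fin (m+2), i ≠ 0 → z i = 0) → ρ z = z) := by
  have hρ_eq : ρ = BallRetraction.retraction 0 ε f := by
    funext z
    rw [hρ]
    ext i
    by_cases hi : i = 0 <;>
      simp [BallRetraction.retraction, BallRetraction.quadraticPart, hi]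
  have hε' : 2 * (ε * Fintype.card (Fin (m+2))) < 1 := by
    rw [lt_div_iff₀ (by positivity)] at hε
    rw [Fintype.card_fin]
    push_cast
    linarith
  subst hρ_eq
  exact ⟨BallRetraction.differentiableOn_retraction fun j k hj hk => (hf j k hj hk).1,
    BallRetraction.mapsTo_retraction (fun j k hj hk => (hf j k hj hk).2) hε0.le hε',
    fun z _ => BallRetraction.retraction_retraction z,
    fun z _ hz => BallRetraction.retraction_eq_self z hz⟩
end

section
/- Let U(ξ,w) = λ(w)·(‖w‖² - Im ξ) on the Siegel domain ℍⁿ = {(ξ,w) ∈ ℂ×ℂⁿ⁻¹ : Im ξ > ‖w‖²}, where λ : ℂⁿ⁻¹ → (0,∞) is a C² function. If U is plurisubharmonic on ℍⁿ and harmonic on every complex geodesic of the form ζ ↦ (i(1+ζ)/(1-ζ) + tμ + it²‖V‖², tV) (t ∈ ℝ, μ ∈ ℝ, V ∈ ℂⁿ⁻¹), then λ is constant. -/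
/-!
On the complex line `ζ ↦ (i c + i σ ζ, w₀ + ζ v)` the function `U` becomes
`g ζ * (‖w₀ + ζ v‖² - c - σ Re ζ)` with `g ζ = λ (w₀ + ζ v)`, and the closed disc of radius `r`
lies in `ℍⁿ` once `c > (‖w₀‖ + r ‖v‖)² + |σ| r`. Taking `c` minimal, the sub-mean value inequality
on the circle of radius `r` is affine in `|σ|` and `σ`; letting `σ → ±∞` leaves
`|avg (Re ζ · g)| ≤ r (g 0 - avg g)`. To first order at `0` the left side is
`∂ₓ g(0) r² / 2 + o(r²)` and the right side is `o(r²)`, so every directional derivative of `λ`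
vanishes.
-/

open Metric Filter Set Topology

/-- Sub-mean value inequality on circles contained (with their discs) in `S`. -/
def SubmeanOn (u : ℂ → ℝ) (S : Set ℂ) : Prop :=
  ∀ z : ℂ, ∀ r : ℝ, 0 < r → closedBall z r ⊆ S →
    u z ≤ (2 * Real.pi)⁻¹ * ∫ θ in (0:ℝ)..(2 * Real.pi),
      u (z + (r : ℂ) * Complex.exp (θ * Complex.I))

/-- `u` is subharmonic on `S`: upper semicontinuous and satisfying the sub-mean value
inequality on discs. -/
def SubharmonicOn (u : ℂ → ℝ) (S : Set ℂ) : Prop :=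
  UpperSemicontinuousOn u S ∧ SubmeanOn u S

/-- `u` is harmonic on `S ⊆ ℂ` : locally it is the real part of a holomorphic function. -/
def HarmonicOnSet (u : ℂ → ℝ) (S : Set ℂ) : Prop :=
  ∀ z ∈ S, ∃ (f : ℂ → ℂ) (r : ℝ), 0 < r ∧ ball z r ⊆ S ∧
    DifferentiableOn ℂ f (ball z r) ∧ ∀ w ∈ ball z r, u w = (f w).re

/-- `u` is plurisubharmonic on `D`: upper semicontinuous and subharmonic on every
complex line. -/
def PshOn {F : Type*} [NormedAddCommGroup F] [NormedSpace ℂ F]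
    (u : F → ℝ) (D : Set F) : Prop :=
  UpperSemicontinuousOn u D ∧
  ∀ a b : F, SubharmonicOn (fun ζ : ℂ => u (a + ζ • b)) {ζ : ℂ | a + ζ • b ∈ D}

/-- The Siegel upper half-space `ℍⁿ = {(ξ,w) : Im ξ > ‖w‖²}`. -/
def siegel (m : ℕ) : Set (ℂ × EuclideanSpace ℂ (Fin m)) :=
  {p | ‖p.2‖ ^ 2 < p.1.im}

open Real

theorem SubmeanOn.le_circleAverage {u : ℂ → ℝ} {S : Set ℂ} (h : SubmeanOn u S) {z : ℂ} {r : ℝ}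
    (hr : 0 < r) (hS : closedBall z r ⊆ S) : u z ≤ circleAverage u z r :=
  h z r hr hS

theorem circleAverage_re_of_differentiable {f : ℂ → ℂ} (hf : Differentiable ℂ f) (c : ℂ)
    (R : ℝ) :
    circleAverage (fun z ↦ (f z).re) c R = (f c).re :=
  (Complex.reCLM.circleAverage_comp_comm hf.continuous.continuousOn.circleIntegrable').trans
    (congrArg Complex.re hf.diffContOnCl.circleAverage)

theorem ContinuousLinearMap.apply_eq_re_mul_add_im_mul (D : ℂ →L[ℝ] ℝ) (z : ℂ) :
    D z = z.re * D 1 + z.im * D Complex.I := by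
  calc D z = D (z.re • (1 : ℂ) + z.im • Complex.I) := by simp [Complex.real_smul]
    _ = z.re * D 1 + z.im * D Complex.I := by
      rw [map_add, map_smul, map_smul, smul_eq_mul, smul_eq_mul]

theorem ContinuousLinearMap.circleAverage_eq_zero (D : ℂ →L[ℝ] ℝ) (R : ℝ) :
    circleAverage D 0 R = 0 := by
  have hD : ⇑D = fun z ↦ ((D 1 - D Complex.I * Complex.I) * z).re := by
    ext z
    simp [D.apply_eq_re_mul_add_im_mul z]
    ring
  rw [hD, circleAverage_re_of_differentiable (by fun_prop)]
  simp

theorem ContinuousLinearMap.circleAverage_re_mul (D : ℂ →L[ℝ] ℝ) (R : ℝ) :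
    circleAverage (fun z ↦ z.re * D z) 0 R = D 1 * R ^ 2 / 2 := by
  -- `x (a x + b y) = a (x² + y²) / 2 + Re ((a - i b) z² / 2)`, and `x² + y² = R²` on the circle
  have hsphere : ∀ z ∈ sphere (0 : ℂ) |R|, z.re * D z =
      ((D 1 * R ^ 2 / 2 : ℝ) + (D 1 - D Complex.I * Complex.I) / 2 * z ^ 2 : ℂ).re := by
    intro z hz
    have hR : Complex.normSq z = R ^ 2 := by
      rw [Complex.normSq_eq_norm_sq, mem_sphere_zero_iff_norm.1 hz, sq_abs]
    rw [Complex.normSq_apply] at hR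
    simp [D.apply_eq_re_mul_add_im_mul z, sq, ← hR]
    ring
  rw [circleAverage_congr_sphere hsphere, circleAverage_re_of_differentiable (by fun_prop)]
  simp [-Complex.ofReal_pow]

theorem Continuous.circleIntegrable {E : Type*} [NormedAddCommGroup E] {f : ℂ → E}
    (hf : Continuous f) {c : ℂ} {R : ℝ} : CircleIntegrable f c R :=
  hf.continuousOn.circleIntegrable'

theorem abs_circleAverage_le {f : ℂ → ℝ} {c : ℂ} {R C : ℝ} (hf : CircleIntegrable f c R)
    (h : ∀ z ∈ sphere c |R|, |f z| ≤ C) : |circleAverage f c R| ≤ C :=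
  abs_circleAverage_le_circleAverage_abs.trans (circleAverage_mono_on_of_le_circle hf.abs h)

theorem le_of_forall_pos_mul_le_add_mul {y z w : ℝ} (h : ∀ s : ℝ, 0 < s → s * z ≤ y + s * w) :
    z ≤ w := by
  by_contra! hwz
  have hs : 0 < (|y| + 1) / (z - w) := by positivity
  have hle : (|y| + 1) / (z - w) * (z - w) ≤ y := by linarith [h _ hs]
  rw [div_mul_cancel₀ _ (sub_ne_zero.2 hwz.ne')] at hle
  linarith [le_abs_self y]

theorem abs_le_of_forall_mul_le_add_abs_mul {y z w : ℝ} (h : ∀ σ : ℝ, σ * z ≤ y + |σ| * w) :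
    |z| ≤ w := by
  refine abs_le.2 ⟨?_, ?_⟩
  · refine neg_le.1 (le_of_forall_pos_mul_le_add_mul (y := y) fun s hs ↦ ?_)
    simpa [abs_of_pos hs] using h (-s)
  · exact le_of_forall_pos_mul_le_add_mul fun s hs ↦ by simpa [abs_of_pos hs] using h s

section Siegel

variable {m : ℕ} {lam : EuclideanSpace ℂ (Fin m) → ℝ} {U : ℂ × EuclideanSpace ℂ (Fin m) → ℝ}

theorem le_circleAverage_of_pshOn_siegel (hU : ∀ p, U p = lam p.2 * (‖p.2‖ ^ 2 - p.1.im))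
    (hpsh : PshOn U (siegel m)) (w₀ v : EuclideanSpace ℂ (Fin m)) {r : ℝ} (hr : 0 < r)
    {σ c : ℝ} (hc : (‖w₀‖ + r * ‖v‖) ^ 2 + |σ| * r < c) :
    lam w₀ * (‖w₀‖ ^ 2 - c) ≤ circleAverage
      (fun ζ : ℂ ↦ lam (w₀ + ζ • v) * (‖w₀ + ζ • v‖ ^ 2 - (c + σ * ζ.re))) 0 r := by
  set A : ℂ × EuclideanSpace ℂ (Fin m) := ((c : ℂ) * Complex.I, w₀)
  set B : ℂ × EuclideanSpace ℂ (Fin m) := ((σ : ℂ) * Complex.I, v)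
  have hsnd : ∀ ζ : ℂ, (A + ζ • B).2 = w₀ + ζ • v := fun ζ ↦ by simp [A, B]
  have him : ∀ ζ : ℂ, (A + ζ • B).1.im = c + σ * ζ.re := fun ζ ↦ by simp [A, B, mul_comm]
  have hball : closedBall 0 r ⊆ {ζ : ℂ | A + ζ • B ∈ siegel m} := by
    intro ζ hζ
    have hζr : ‖ζ‖ ≤ r := mem_closedBall_zero_iff.1 hζ
    have hnorm : ‖w₀ + ζ • v‖ ≤ ‖w₀‖ + r * ‖v‖ := by
      grw [norm_add_le, norm_smul, hζr]
    have hre : -(σ * ζ.re) ≤ |σ| * r := by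
      grw [neg_le_abs, abs_mul, Complex.abs_re_le_norm, hζr]
    change ‖(A + ζ • B).2‖ ^ 2 < (A + ζ • B).1.im
    rw [hsnd, him]
    nlinarith [norm_nonneg (w₀ + ζ • v)]
  convert (hpsh.2 A B).2.le_circleAverage hr hball using 1
  · simp [hU, A]
  · simp_rw [hU, hsnd, him]

theorem abs_circleAverage_re_mul_le_of_pshOn_siegel (hlam : Continuous lam)
    (hU : ∀ p, U p = lam p.2 * (‖p.2‖ ^ 2 - p.1.im)) (hpsh : PshOn U (siegel m))
    (w₀ v : EuclideanSpace ℂ (Fin m)) {r : ℝ} (hr : 0 < r) :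
    |circleAverage (fun ζ : ℂ ↦ ζ.re * lam (w₀ + ζ • v)) 0 r| ≤
      r * (lam w₀ - circleAverage (fun ζ : ℂ ↦ lam (w₀ + ζ • v)) 0 r) := by
  set g : ℂ → ℝ := fun ζ ↦ lam (w₀ + ζ • v)
  have hg : Continuous g := hlam.comp (by fun_prop)
  set K := (‖w₀‖ + r * ‖v‖) ^ 2 + 1
  refine abs_le_of_forall_mul_le_add_abs_mul (y := circleAverage
    (fun ζ ↦ g ζ * (‖w₀ + ζ • v‖ ^ 2 - K)) 0 r - lam w₀ * (‖w₀‖ ^ 2 - K)) fun σ ↦ ?_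
  have hsub := le_circleAverage_of_pshOn_siegel hU hpsh w₀ v hr
    (σ := σ) (c := K + |σ| * r) (by linarith)
  have hsplit :
      circleAverage (fun ζ ↦ g ζ * (‖w₀ + ζ • v‖ ^ 2 - (K + |σ| * r + σ * ζ.re))) 0 r =
      circleAverage (fun ζ ↦ g ζ * (‖w₀ + ζ • v‖ ^ 2 - K)) 0 r - (|σ| * r) * circleAverage g 0 r
        - σ * circleAverage (fun ζ : ℂ ↦ ζ.re * g ζ) 0 r := by
    have hfun : (fun ζ ↦ g ζ * (‖w₀ + ζ • v‖ ^ 2 - (K + |σ| * r + σ * ζ.re))) =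
        fun ζ ↦ (g ζ * (‖w₀ + ζ • v‖ ^ 2 - K) - (|σ| * r) • g ζ) - σ • (ζ.re * g ζ) := by
      ext ζ; simp only [smul_eq_mul]; ring
    rw [hfun, circleAverage_fun_sub (Continuous.circleIntegrable (by fun_prop))
        (Continuous.circleIntegrable (by fun_prop)),
      circleAverage_fun_sub (Continuous.circleIntegrable (by fun_prop))
          (Continuous.circleIntegrable (by fun_prop)),
      circleAverage_fun_smul, circleAverage_fun_smul, smul_eq_mul, smul_eq_mul]
  rw [hsplit] at hsub
  linarith

end Siegel

theorem circleAverage_eq_add_circleAverage_remainder {g : ℂ → ℝ} (hg : Continuous g)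
    (D : ℂ →L[ℝ] ℝ) (r : ℝ) :
    circleAverage g 0 r = g 0 + circleAverage (fun ζ ↦ g ζ - g 0 - D ζ) 0 r := by
  calc circleAverage g 0 r = circleAverage (fun ζ ↦ g 0 + (D ζ + (g ζ - g 0 - D ζ))) 0 r := by
        congr 1; ext ζ; ring
    _ = g 0 + circleAverage (fun ζ ↦ g ζ - g 0 - D ζ) 0 r := by
      rw [circleAverage_fun_add (Continuous.circleIntegrable (by fun_prop))
          (Continuous.circleIntegrable (by fun_prop)),
        circleAverage_const,
        circleAverage_fun_add (Continuous.circleIntegrable (by fun_prop))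
            (Continuous.circleIntegrable (by fun_prop)),
        D.circleAverage_eq_zero, zero_add]

theorem circleAverage_re_mul_eq_add_circleAverage_remainder {g : ℂ → ℝ} (hg : Continuous g)
    (D : ℂ →L[ℝ] ℝ) (r : ℝ) :
    circleAverage (fun ζ : ℂ ↦ ζ.re * g ζ) 0 r =
      D 1 * r ^ 2 / 2 + circleAverage (fun ζ : ℂ ↦ ζ.re * (g ζ - g 0 - D ζ)) 0 r := by
  calc circleAverage (fun ζ : ℂ ↦ ζ.re * g ζ) 0 r
      = circleAverage
          (fun ζ ↦ g 0 • Complex.reCLM ζ + (ζ.re * D ζ + ζ.re * (g ζ - g 0 - D ζ))) 0 r := by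
        congr 1; ext ζ; simp only [Complex.reCLM_apply, smul_eq_mul]; ring
    _ = D 1 * r ^ 2 / 2 + circleAverage (fun ζ : ℂ ↦ ζ.re * (g ζ - g 0 - D ζ)) 0 r := by
      rw [circleAverage_fun_add (Continuous.circleIntegrable (by fun_prop))
          (Continuous.circleIntegrable (by fun_prop)),
        circleAverage_fun_smul, Complex.reCLM.circleAverage_eq_zero,
        circleAverage_fun_add (Continuous.circleIntegrable (by fun_prop))
            (Continuous.circleIntegrable (by fun_prop)),
        D.circleAverage_re_mul, smul_zero, zero_add]

theorem fderiv_apply_one_eq_zero_of_abs_circleAverage_re_mul_le {g : ℂ → ℝ} (hg : Continuous g)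
    (hdiff : DifferentiableAt ℝ g 0)
    (h : ∀ r : ℝ, 0 < r →
      |circleAverage (fun ζ : ℂ ↦ ζ.re * g ζ) 0 r| ≤ r * (g 0 - circleAverage g 0 r)) :
    fderiv ℝ g 0 1 = 0 := by
  set D := fderiv ℝ g 0
  refine abs_nonpos_iff.1 (le_of_forall_pos_le_add fun ε hε ↦ ?_)
  obtain ⟨δ, hδ, hrem⟩ := Metric.eventually_nhds_iff.1
    (hdiff.hasFDerivAt.isLittleO.def (c := ε / 4) (by positivity))
  set r := δ / 2
  have hr : 0 < r := by positivity
  have hrδ : r < δ := by simp only [r]; linarith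
  have hsphere : ∀ ζ ∈ sphere (0 : ℂ) |r|, |g ζ - g 0 - D ζ| ≤ ε / 4 * r := fun ζ hζ ↦ by
    have hζ' : ‖ζ‖ = r := by simpa [abs_of_pos hr] using hζ
    simpa [hζ'] using hrem (show dist ζ 0 < δ by rwa [dist_zero_right, hζ'])
  have hR := abs_circleAverage_le (Continuous.circleIntegrable (by fun_prop)) hsphere
  have hReR : |circleAverage (fun ζ : ℂ ↦ ζ.re * (g ζ - g 0 - D ζ)) 0 r| ≤ r * (ε / 4 * r) :=
    abs_circleAverage_le (Continuous.circleIntegrable (by fun_prop)) fun ζ hζ ↦ by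
      have hζ' : ‖ζ‖ = r := by simpa [abs_of_pos hr] using hζ
      rw [abs_mul]
      gcongr
      · exact hζ' ▸ Complex.abs_re_le_norm ζ
      · exact hsphere ζ hζ
  have hmain := h r hr
  rw [circleAverage_re_mul_eq_add_circleAverage_remainder hg D,
    circleAverage_eq_add_circleAverage_remainder hg D] at hmain
  set X := circleAverage (fun ζ : ℂ ↦ ζ.re * (g ζ - g 0 - D ζ)) 0 r
  have htri := abs_sub (D 1 * r ^ 2 / 2 + X) X
  rw [add_sub_cancel_right, abs_div, abs_mul, abs_of_pos (by positivity : (0 : ℝ) < r ^ 2),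
    abs_two] at htri
  have key : |D 1| * (r ^ 2 / 2) ≤ ε * (r ^ 2 / 2) := by
    nlinarith [neg_le_abs (circleAverage (fun ζ ↦ g ζ - g 0 - D ζ) 0 r)]
  rw [zero_add]
  exact le_of_mul_le_mul_right key (by positivity)

theorem stmt8_general (m : ℕ) (lam : EuclideanSpace ℂ (Fin m) → ℝ)
    (hC2 : ContDiff ℝ 2 lam)
    (U : ℂ × EuclideanSpace ℂ (Fin m) → ℝ)
    (hU : ∀ p, U p = lam p.2 * (‖p.2‖ ^ 2 - p.1.im))
    (hpsh : PshOn U (siegel m)) :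
    ∀ w w' : EuclideanSpace ℂ (Fin m), lam w = lam w' := by
  have hlam : Differentiable ℝ lam := hC2.differentiable (by norm_num)
  refine is_const_of_fderiv_eq_zero hlam fun w₀ ↦ ContinuousLinearMap.ext fun v ↦ ?_
  have hline : HasFDerivAt (fun ζ : ℂ ↦ w₀ + ζ • v)
      ((ContinuousLinearMap.id ℝ ℂ).smulRight v) 0 :=
    ((hasFDerivAt_id (0 : ℂ)).smul_const v).const_add w₀
  have hchain : HasFDerivAt (fun ζ : ℂ ↦ lam (w₀ + ζ • v))
      ((fderiv ℝ lam w₀).comp ((ContinuousLinearMap.id ℝ ℂ).smulRight v)) 0 := by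
    have h := (hlam (w₀ + (0 : ℂ) • v)).hasFDerivAt.comp (0 : ℂ) hline
    rwa [zero_smul, add_zero] at h
  have hzero := fderiv_apply_one_eq_zero_of_abs_circleAverage_re_mul_le
    (g := fun ζ : ℂ ↦ lam (w₀ + ζ • v)) (hlam.continuous.comp (by fun_prop))
    hchain.differentiableAt fun r hr ↦ by
      simpa using abs_circleAverage_re_mul_le_of_pshOn_siegel hlam.continuous hU hpsh w₀ v hr
  rw [hchain.fderiv] at hzero
  simpa using hzero

/-- If `U(ξ,w) = λ(w)(‖w‖² - Im ξ)` with `λ` a positive `C²` function is plurisubharmonic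
on the Siegel domain and harmonic on every complex geodesic
`ζ ↦ (i(1+ζ)/(1-ζ) + tμ + it²‖V‖², tV)`, then `λ` is constant. -/
theorem stmt8 (m : ℕ) (lam : EuclideanSpace ℂ (Fin m) → ℝ)
    (hC2 : ContDiff ℝ 2 lam) (hpos : ∀ w, 0 < lam w)
    (U : ℂ × EuclideanSpace ℂ (Fin m) → ℝ)
    (hU : ∀ p, U p = lam p.2 * (‖p.2‖ ^ 2 - p.1.im))
    (hpsh : PshOn U (siegel m))
    (hharm : ∀ (t μ : ℝ) (V : EuclideanSpace ℂ (Fin m)),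
      HarmonicOnSet (fun ζ : ℂ =>
        U (Complex.I * (1 + ζ) / (1 - ζ) + ((t * μ : ℝ) : ℂ)
            + Complex.I * (((t ^ 2 * ‖V‖ ^ 2 : ℝ)) : ℂ), t • V))
        (ball (0:ℂ) 1)) :
    ∀ w w' : EuclideanSpace ℂ (Fin m), lam w = lam w' :=
  stmt8_general m lam hC2 U hU hpsh
end

section
/- Let D ⊂ ℂⁿ be a bounded convex domain and ρ : D → S a holomorphic retraction of D onto a subset S whose fibers ρ⁻¹(x) are intersections of D with complex affine hyperplanes. If E ⊂ D is a convex open set with ρ(E) ⊆ E ∩ S, and x ∈ S lies on ∂E, then the affine hyperplane H containing ρ⁻¹(x) is disjoint from E and satisfies H - x = T_x^ℂ ∂E (i.e. H is the complex tangent hyperplane of ∂E at x). -/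
open Metric Filter Set Topology Bornology

/-- Key geometric step in the uniqueness of linear holomorphic retractions: if the
holomorphic retraction `ρ` with affine fiber `D ∩ H` over `x` satisfies `ρ(E) ⊆ E ∩ S`
for a convex open `E`, and `x ∈ S ∩ ∂E`, then `H` misses `E` and `H - x` is the complex
tangent space of `∂E` at `x` (the maximal complex subspace of the supporting hyperplane
`ker ℓ`). -/
theorem stmt11 {V : Type*} [NormedAddCommGroup V] [NormedSpace ℂ V]
    (D S : Set V) (hD : IsOpen D) (hconv : Convex ℝ D) (hDb : IsBounded D)
    (hS : S ⊆ D)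
    (ρ : V → V) (hρdiff : DifferentiableOn ℂ ρ D) (hρmaps : MapsTo ρ D S)
    (hρρ : ∀ z ∈ D, ρ (ρ z) = ρ z) (hfix : ∀ z ∈ S, ρ z = z)
    (E : Set V) (hE : IsOpen E) (hEconv : Convex ℝ E) (hED : E ⊆ D)
    (hρE : ∀ z ∈ E, ρ z ∈ E ∩ S)
    (x : V) (hxS : x ∈ S) (hxE : x ∈ frontier E)
    (g : V →L[ℂ] ℂ) (hg : g ≠ 0) (c : ℂ) (H : Set V) (hH : H = {z | g z = c})
    (hfib : ∀ z ∈ D, (ρ z = x ↔ z ∈ H))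
    (ℓ : V →L[ℝ] ℝ) (hℓ : ℓ ≠ 0) (hsupp : ∀ z ∈ E, ℓ z < ℓ x)
    (huniq : ∀ ℓ' : V →L[ℝ] ℝ, ℓ' ≠ 0 → (∀ z ∈ E, ℓ' z < ℓ' x) →
      ∃ c' : ℝ, 0 < c' ∧ ℓ' = c' • ℓ) :
    Disjoint H E ∧
    H = (fun v => x + v) '' {v : V | ℓ v = 0 ∧ ℓ (Complex.I • v) = 0} := by
  have hxD : x ∈ D := hS hxS
  have hxH : x ∈ H := (hfib x hxD).mp (hfix x hxS)
  have hgx : g x = c := by rw [hH] at hxH; exact hxH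
  have hxnotE : x ∉ E := fun h => (hE.frontier_eq ▸ hxE).2 h
  -- Part 1: disjointness
  have hdisj : Disjoint H E := by
    rw [Set.disjoint_left]
    intro z hzH hzE
    have hzD : z ∈ D := hED hzE
    have hz : ρ z = x := (hfib z hzD).mpr hzH
    exact hxnotE (hz ▸ (hρE z hzE).1)
  -- E is nonempty
  have hEne : E.Nonempty := by
    by_contra h
    rw [Set.not_nonempty_iff_eq_empty] at h
    rw [h, frontier_empty] at hxE
    exact hxE
  obtain ⟨z₀, hz₀⟩ := hEne
  -- a vector u with g u = 1
  obtain ⟨v₀, hv₀⟩ := DFunLike.ne_iff.mp hg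
  have hv₀' : g v₀ ≠ 0 := hv₀
  set u : V := (g v₀)⁻¹ • v₀ with hu_def
  have hu : g u = 1 := by
    rw [hu_def, map_smul, smul_eq_mul, inv_mul_cancel₀ hv₀']
  -- g '' E is open
  have hAopen : IsOpen (⇑g '' E) := by
    rw [isOpen_iff_mem_nhds]
    rintro t ⟨z, hz, rfl⟩
    have hcont : Continuous (fun s : ℂ => z + (s - g z) • u) := by continuity
    have hmem : (fun s : ℂ => z + (s - g z) • u) ⁻¹' E ∈ 𝓝 (g z) := by
      apply hcont.continuousAt.preimage_mem_nhds
      have : z + ((g z : ℂ) - g z) • u = z := by simp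
      rw [this]
      exact hE.mem_nhds hz
    filter_upwards [hmem] with s hs
    exact ⟨_, hs, by simp [map_add, map_smul, hu]⟩
  -- g '' E is convex
  have hAconv : Convex ℝ (⇑g '' E) := by
    have := hEconv.linear_image (g.restrictScalars ℝ).toLinearMap
    simpa using this
  -- c is not in g '' E
  have hcA : c ∉ ⇑g '' E := by
    rintro ⟨z, hz, hgz⟩
    exact (Set.disjoint_left.mp hdisj (by rw [hH]; exact hgz) hz)
  -- separate
  obtain ⟨f, hf⟩ := geometric_hahn_banach_open_point hAconv hAopen hcA
  set ℓ' : V →L[ℝ] ℝ := f.comp (g.restrictScalars ℝ) with hℓ'_def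
  have hℓ'app : ∀ v : V, ℓ' v = f (g v) := fun v => rfl
  have hℓ'lt : ∀ z ∈ E, ℓ' z < ℓ' x := by
    intro z hz
    rw [hℓ'app, hℓ'app, hgx]
    exact hf _ ⟨z, hz, rfl⟩
  have hfz₀ : f (g z₀) < f c := hf _ ⟨z₀, hz₀, rfl⟩
  have hℓ'ne : ℓ' ≠ 0 := by
    intro h0
    have h1 : ℓ' z₀ < ℓ' x := hℓ'lt z₀ hz₀
    rw [h0] at h1
    simp at h1
  have hfne : f ≠ 0 := by
    intro h0
    rw [h0] at hfz₀
    simp at hfz₀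
  obtain ⟨c', hc', heq⟩ := huniq ℓ' hℓ'ne hℓ'lt
  have heval : ∀ v : V, f (g v) = c' * ℓ v := by
    intro v
    have := congrFun (congrArg (DFunLike.coe) heq) v
    simpa [hℓ'app] using this
  -- key complex-linear algebra fact
  have fzero : ∀ ζ : ℂ, f ζ = 0 → f (Complex.I * ζ) = 0 → ζ = 0 := by
    intro ζ h1 h2
    by_contra hζ
    apply hfne
    ext η
    have hrepr : (η / ζ).re • ζ + (η / ζ).im • (Complex.I * ζ) = η := by
      have h3 : ((η / ζ).re : ℂ) * ζ + ((η / ζ).im : ℂ) * (Complex.I * ζ)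
          = ((η / ζ).re + (η / ζ).im * Complex.I) * ζ := by ring
      calc (η / ζ).re • ζ + (η / ζ).im • (Complex.I * ζ)
          = ((η / ζ).re : ℂ) * ζ + ((η / ζ).im : ℂ) * (Complex.I * ζ) := by
            rw [Complex.real_smul, Complex.real_smul]
        _ = ((η / ζ).re + (η / ζ).im * Complex.I) * ζ := h3
        _ = (η / ζ) * ζ := by rw [Complex.re_add_im]
        _ = η := div_mul_cancel₀ η hζ
    rw [← hrepr, map_add, map_smul, map_smul, h1, h2, smul_zero, smul_zero, add_zero]
    rfl
  -- kernel characterization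
  have key : ∀ v : V, g v = 0 ↔ (ℓ v = 0 ∧ ℓ (Complex.I • v) = 0) := by
    intro v
    have e1 : f (g v) = c' * ℓ v := heval v
    have e2 : f (Complex.I * g v) = c' * ℓ (Complex.I • v) := by
      have := heval (Complex.I • v)
      rwa [map_smul, smul_eq_mul] at this
    constructor
    · intro h
      constructor
      · have h1 : c' * ℓ v = 0 := by rw [← e1, h, map_zero]
        exact (mul_eq_zero.mp h1).resolve_left hc'.ne'
      · have h2 : c' * ℓ (Complex.I • v) = 0 := by rw [← e2, h, mul_zero, map_zero]
        exact (mul_eq_zero.mp h2).resolve_left hc'.ne'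
    · rintro ⟨h1, h2⟩
      apply fzero (g v)
      · rw [e1, h1, mul_zero]
      · rw [e2, h2, mul_zero]
  refine ⟨hdisj, ?_⟩
  ext z
  rw [hH]
  simp only [Set.mem_image, Set.mem_setOf_eq]
  constructor
  · intro hz
    refine ⟨z - x, (key (z - x)).mp ?_, by abel⟩
    rw [map_sub, hz, hgx, sub_self]
  · rintro ⟨v, hv, rfl⟩
    have : g v = 0 := (key v).mpr hv
    show g (x + v) = c
    rw [map_add, this, add_zero, hgx]
end

section
/- Let J(ζ) = λ(ζ)φ'(ζ) + J^⊥(ζ) be a holomorphic vector field along a complex geodesic φ : 𝔻 → D of a strongly convex domain, where λ(ζ) = α + iβζ - ᾱζ², α ∈ ℂ, β ∈ ℝ, and φ̃(ζ)·J^⊥(ζ) ≡ 0 on 𝔻 with φ̃ the dual map of φ normalized so that φ̃(ζ)·φ'(ζ) ≡ 1. If Re α = 0 and J(1) = 0, then J(ζ) = iγ(1-ζ)²φ'(ζ) + J^⊥(ζ) for some γ ∈ ℝ with J^⊥(1) = 0, and consequently Re(φ̃(r)·J(r)) = 0 for all r ∈ (-1,1). -/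
open Metric Filter Set Topology

/-
The pairing with the dual map splits `J = λφ' + J^⊥` as `φ̃·J = λ`, so `J(1) = 0` gives `λ(1) = 0`.
For `α = iα₂` purely imaginary this forces `β = -2α₂`, i.e. `λ(ζ) = iα₂(1 - ζ)²`, whence `J^⊥(1) = 0`;
on the real diameter `λ(r) = iα₂(1 - r)²` is purely imaginary.
-/

/-- The bilinear (non-Hermitian) dot product `a·b = Σ aᵢbᵢ` on `ℂⁿ`. -/
noncomputable def dotc {n : ℕ} (a b : EuclideanSpace ℂ (Fin n)) : ℂ := ∑ i, a i * b i

lemma dotc_zero_right {n : ℕ} (a : EuclideanSpace ℂ (Fin n)) : dotc a 0 = 0 := by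
  simp [dotc]

lemma dotc_smul_add_right {n : ℕ} (a b d : EuclideanSpace ℂ (Fin n)) (c : ℂ) :
    dotc a (c • b + d) = c * dotc a b + dotc a d := by
  simp only [dotc, Finset.mul_sum, ← Finset.sum_add_distrib, PiLp.add_apply, PiLp.smul_apply,
    smul_eq_mul]
  exact Finset.sum_congr rfl fun i _ => by ring

lemma dotc_smul_add_right_of_dual {n : ℕ} {a b d : EuclideanSpace ℂ (Fin n)} (c : ℂ)
    (hdual : dotc a b = 1) (hperp : dotc a d = 0) : dotc a (c • b + d) = c := by
  rw [dotc_smul_add_right, hdual, hperp, mul_one, add_zero]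

lemma jacobi_coeff_eq_of_eval_one {α : ℂ} {β : ℝ} (hα : α.re = 0)
    (h1 : α + Complex.I * β - (starRingEnd ℂ) α = 0) (ζ : ℂ) :
    α + Complex.I * β * ζ - (starRingEnd ℂ) α * ζ ^ 2 = Complex.I * α.im * (1 - ζ) ^ 2 := by
  have hα_eq : α = Complex.I * α.im := Complex.ext (by simp [hα]) (by simp)
  have hconj : (starRingEnd ℂ) α = -(Complex.I * α.im) := by
    rw [hα_eq]; simp
  have hβ : Complex.I * ((β : ℂ) + 2 * α.im) = 0 := by
    linear_combination h1 - hα_eq + hconj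
  have hβ' : (β : ℂ) = -2 * α.im := by
    linear_combination (mul_eq_zero.mp hβ).resolve_left Complex.I_ne_zero
  linear_combination hα_eq + Complex.I * ζ * hβ' - ζ ^ 2 * hconj

lemma re_I_mul_ofReal_mul_one_sub_sq (γ r : ℝ) :
    (Complex.I * γ * (1 - (r : ℂ)) ^ 2).re = 0 := by
  have : Complex.I * γ * (1 - (r : ℂ)) ^ 2 = Complex.I * ((γ * (1 - r) ^ 2 : ℝ) : ℂ) := by
    push_cast; ring
  rw [this, Complex.re_mul_ofReal, Complex.I_re, zero_mul]

theorem stmt12_general {n : ℕ}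
    (φd φt Jp J : ℂ → EuclideanSpace ℂ (Fin n)) (α : ℂ) (β : ℝ) (lam : ℂ → ℂ)
    (hlam : ∀ ζ : ℂ, lam ζ = α + Complex.I * β * ζ - (starRingEnd ℂ) α * ζ ^ 2)
    (hdual : ∀ ζ ∈ closedBall (0:ℂ) 1, dotc (φt ζ) (φd ζ) = 1)
    (hperp : ∀ ζ ∈ closedBall (0:ℂ) 1, dotc (φt ζ) (Jp ζ) = 0)
    (hα : α.re = 0)
    (hJ : ∀ ζ : ℂ, J ζ = lam ζ • φd ζ + Jp ζ)
    (hJ1 : J 1 = 0) :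
    ∃ γ : ℝ, (∀ ζ : ℂ, lam ζ = Complex.I * γ * (1 - ζ) ^ 2) ∧ Jp 1 = 0 ∧
      ∀ r : ℝ, r ∈ Ioo (-1 : ℝ) 1 → (dotc (φt (r : ℂ)) (J (r : ℂ))).re = 0 := by
  have hdotJ : ∀ ζ ∈ closedBall (0:ℂ) 1, dotc (φt ζ) (J ζ) = lam ζ := fun ζ hζ => by
    rw [hJ, dotc_smul_add_right_of_dual _ (hdual ζ hζ) (hperp ζ hζ)]
  have hone : (1 : ℂ) ∈ closedBall (0:ℂ) 1 := by simp
  have hlam1 : lam 1 = 0 := by rw [← hdotJ 1 hone, hJ1, dotc_zero_right]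
  have hshape : ∀ ζ, lam ζ = Complex.I * α.im * (1 - ζ) ^ 2 := fun ζ => by
    rw [hlam, jacobi_coeff_eq_of_eval_one hα (by simpa [hlam] using hlam1)]
  refine ⟨α.im, hshape, by simpa [hJ, hlam1] using hJ1, fun r hr => ?_⟩
  have hr_mem : (r : ℂ) ∈ closedBall (0:ℂ) 1 := by
    simpa [Complex.norm_real, abs_le] using And.intro hr.1.le hr.2.le
  rw [hdotJ r hr_mem, hshape]
  exact re_I_mul_ofReal_mul_one_sub_sq _ _

/-- Structure of Jacobi fields along a complex geodesic: if
`J = λφ' + J^⊥` with `λ(ζ) = α + iβζ - ᾱζ²`, `φ̃·J^⊥ ≡ 0`, `φ̃·φ' ≡ 1`, `Re α = 0` and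
`J(1) = 0`, then `λ(ζ) = iγ(1-ζ)²` for some real `γ`, `J^⊥(1) = 0`, and
`Re(φ̃(r)·J(r)) = 0` for all `r ∈ (-1,1)`. -/
theorem stmt12 {n : ℕ}
    (φ φd φt Jp J : ℂ → EuclideanSpace ℂ (Fin n)) (α : ℂ) (β : ℝ) (lam : ℂ → ℂ)
    (hlam : ∀ ζ : ℂ, lam ζ = α + Complex.I * β * ζ - (starRingEnd ℂ) α * ζ ^ 2)
    (hφdiff : DifferentiableOn ℂ φ (ball (0:ℂ) 1))
    (hφtdiff : DifferentiableOn ℂ φt (ball (0:ℂ) 1))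
    (hφtcont : ContinuousOn φt (closedBall (0:ℂ) 1))
    (hJpdiff : DifferentiableOn ℂ Jp (ball (0:ℂ) 1))
    (hJpcont : ContinuousOn Jp (closedBall (0:ℂ) 1))
    (hderiv : ∀ ζ ∈ closedBall (0:ℂ) 1, HasDerivWithinAt φ (φd ζ) (closedBall (0:ℂ) 1) ζ)
    (hdual : ∀ ζ ∈ closedBall (0:ℂ) 1, dotc (φt ζ) (φd ζ) = 1)
    (hperp : ∀ ζ ∈ closedBall (0:ℂ) 1, dotc (φt ζ) (Jp ζ) = 0)
    (hα : α.re = 0)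
    (hJ : ∀ ζ : ℂ, J ζ = lam ζ • φd ζ + Jp ζ)
    (hJ1 : J 1 = 0) :
    ∃ γ : ℝ, (∀ ζ : ℂ, lam ζ = Complex.I * γ * (1 - ζ) ^ 2) ∧ Jp 1 = 0 ∧
      ∀ r : ℝ, r ∈ Ioo (-1 : ℝ) 1 → (dotc (φt (r : ℂ)) (J (r : ℂ))).re = 0 :=
  stmt12_general φd φt Jp J α β lam hlam hdual hperp hα hJ hJ1
end

section
/- Let D ⊂ ℂⁿ be a bounded strongly convex domain with smooth boundary, p ∈ ∂D. Suppose u is a locally bounded plurisubharmonic function on D that is maximal (i.e. (∂∂̄u)ⁿ = 0 in the Bedford–Taylor sense), lim_{z→x} u(z) = 0 for every x ∈ ∂D∖{p}, and lim_{z→p} u(z)/Ω_{D,p}(z) = 1. Then u = Ω_{D,p} on D. -/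
open Metric Filter Set Topology

/-- `u` is a maximal plurisubharmonic function on `D` (this encodes the vanishing of the
Bedford–Taylor Monge–Ampère operator `(∂∂̄u)ⁿ = 0`): every plurisubharmonic function on a
relatively compact open subset with boundary values dominated by `u` is dominated by `u`. -/
def MaximalPshOn {F : Type*} [NormedAddCommGroup F] [NormedSpace ℂ F]
    (u : F → ℝ) (D : Set F) : Prop :=
  ∀ G : Set F, IsOpen G → closure G ⊆ D → IsCompact (closure G) →
    ∀ v : F → ℝ, PshOn v G →
      (∀ x ∈ frontier G, limsup v (𝓝[G] x) ≤ u x) →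
      ∀ z ∈ G, v z ≤ u z

/-- `D` is a smoothly bounded strongly convex domain. -/
def IsSmoothStronglyConvex {F : Type*} [NormedAddCommGroup F] [NormedSpace ℝ F]
    (D : Set F) : Prop :=
  ∃ r : F → ℝ, ContDiff ℝ (⊤ : ℕ∞) r ∧ D = {x | r x < 0} ∧ frontier D = {x | r x = 0} ∧
    (∀ x ∈ frontier D, fderiv ℝ r x ≠ 0) ∧
    ∀ x ∈ frontier D, ∀ v : F, v ≠ 0 → fderiv ℝ r x v = 0 →
      0 < fderiv ℝ (fun y => fderiv ℝ r y v) x v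

/-- The Phragmen–Lindelöf family `S_p(D)`. -/
def InFamilyS {n : ℕ} (D : Set (EuclideanSpace ℂ (Fin n)))
    (p ν : EuclideanSpace ℂ (Fin n)) (u : EuclideanSpace ℂ (Fin n) → ℝ) : Prop :=
  PshOn u D ∧
  (∀ x ∈ frontier D, x ≠ p → limsup u (𝓝[D] x) ≤ 0) ∧
  ∀ (γ : ℝ → EuclideanSpace ℂ (Fin n)) (d : EuclideanSpace ℂ (Fin n)),
    ContDiffOn ℝ 1 γ (Icc 0 1) → (∀ t ∈ Ico (0:ℝ) 1, γ t ∈ D) → γ 1 = p →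
    HasDerivWithinAt γ d (Icc 0 1) 1 → 0 < (inner ℂ ν d : ℂ).re →
    2 * ((inner ℂ ν d : ℂ)⁻¹).re ≤ liminf (fun t => |u (γ t)| * (1 - t)) (𝓝[<] (1:ℝ))

lemma uscOn_affine {α : Type*} [TopologicalSpace α] {f : α → ℝ} {S : Set α}
    (h : UpperSemicontinuousOn f S) {a b : ℝ} (ha : 0 < a) :
    UpperSemicontinuousOn (fun z => a * f z + b) S := by
  intro x hx t ht
  have ht' : a * f x + b < t := ht
  have h2 : f x < (t - b) / a := by
    rw [lt_div_iff₀ ha]; nlinarith [ht']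
  filter_upwards [h x hx _ h2] with z hz
  have := (lt_div_iff₀ ha).mp hz
  nlinarith

lemma submeanOn_affine {f : ℂ → ℝ} {S : Set ℂ} (h : SubmeanOn f S)
    {a b : ℝ} (ha : 0 < a) (hb : b ≤ 0) :
    SubmeanOn (fun z => a * f z + b) S := by
  intro z r hr hball
  have hmain := h z r hr hball
  set g : ℝ → ℝ := fun θ => f (z + (r:ℂ) * Complex.exp (θ * Complex.I)) with hg
  by_cases hint : IntervalIntegrable g MeasureTheory.volume 0 (2 * Real.pi)
  · have : (∫ θ in (0:ℝ)..(2 * Real.pi), (a * g θ + b))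
        = a * (∫ θ in (0:ℝ)..(2 * Real.pi), g θ) + (2 * Real.pi) * b := by
      rw [intervalIntegral.integral_add (hint.const_mul a) (intervalIntegrable_const)]
      rw [intervalIntegral.integral_const_mul, intervalIntegral.integral_const]
      simp [smul_eq_mul]
    rw [this]
    have hpi : (0:ℝ) < 2 * Real.pi := by positivity
    have key := mul_le_mul_of_nonneg_left hmain ha.le
    have hid : (2 * Real.pi)⁻¹ * ((a * ∫ θ in (0:ℝ)..(2 * Real.pi), g θ) + 2 * Real.pi * b)
        = a * ((2 * Real.pi)⁻¹ * ∫ θ in (0:ℝ)..(2 * Real.pi), g θ) + b := by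
      field_simp
    rw [hid]
    linarith [key]
  · have hint2 : ¬ IntervalIntegrable (fun θ => a * g θ + b) MeasureTheory.volume 0 (2 * Real.pi) := by
      intro hcon
      apply hint
      have : g = fun θ => a⁻¹ * ((a * g θ + b) - b) := by
        funext θ; field_simp; ring
      rw [this]
      exact ((hcon.sub intervalIntegrable_const).const_mul a⁻¹)
    rw [intervalIntegral.integral_undef hint] at hmain
    rw [intervalIntegral.integral_undef hint2]
    simp only [mul_zero] at hmain ⊢
    nlinarith [mul_le_mul_of_nonneg_left hmain (le_of_lt ha)]

lemma subharmonicOn_affine {f : ℂ → ℝ} {S : Set ℂ} (h : SubharmonicOn f S)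
    {a b : ℝ} (ha : 0 < a) (hb : b ≤ 0) :
    SubharmonicOn (fun z => a * f z + b) S :=
  ⟨uscOn_affine h.1 ha, submeanOn_affine h.2 ha hb⟩

lemma subharmonicOn_mono {f : ℂ → ℝ} {S T : Set ℂ} (h : SubharmonicOn f S) (hTS : T ⊆ S) :
    SubharmonicOn f T :=
  ⟨h.1.mono hTS, fun z r hr hball => h.2 z r hr (hball.trans hTS)⟩


/-- Uniqueness of the pluricomplex Poisson kernel `Ω_{D,p}`: a locally bounded maximal
plurisubharmonic function `u` on `D` vanishing on `∂D∖{p}` with `u/Ω_{D,p} → 1` at `p`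
coincides with `Ω_{D,p}`. Here `Ω_{D,p}` is characterized as the maximal element of the
family `S_p(D)`, negative, maximal for the Monge–Ampère operator, and vanishing at the
boundary off `p`. -/
theorem stmt14 {n : ℕ} (D : Set (EuclideanSpace ℂ (Fin n)))
    (hD : IsOpen D) (hDn : D.Nonempty) (hDb : Bornology.IsBounded D)
    (hconv : Convex ℝ D) (hsc : IsSmoothStronglyConvex D)
    (p : EuclideanSpace ℂ (Fin n)) (hp : p ∈ frontier D)
    (ν : EuclideanSpace ℂ (Fin n)) (hν : ‖ν‖ = 1)
    (hout : ∀ z ∈ D, (inner ℂ ν (z - p) : ℂ).re < 0)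
    (Ω : EuclideanSpace ℂ (Fin n) → ℝ)
    (hΩmem : InFamilyS D p ν Ω)
    (hΩmax : ∀ v, InFamilyS D p ν v → ∀ z ∈ D, v z ≤ Ω z)
    (hΩneg : ∀ z ∈ D, Ω z < 0)
    (hΩMA : MaximalPshOn Ω D)
    (hΩ0 : ∀ x ∈ frontier D, x ≠ p → Tendsto Ω (𝓝[D] x) (𝓝 0))
    (u : EuclideanSpace ℂ (Fin n) → ℝ)
    (hupsh : PshOn u D)
    (huloc : ∀ z ∈ D, ∃ C : ℝ, ∃ r : ℝ, 0 < r ∧ ∀ w ∈ ball z r ∩ D, |u w| ≤ C)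
    (huMA : MaximalPshOn u D)
    (hu0 : ∀ x ∈ frontier D, x ≠ p → Tendsto u (𝓝[D] x) (𝓝 0))
    (huq : Tendsto (fun z => u z / Ω z) (𝓝[D] p) (𝓝 1)) :
    ∀ z ∈ D, u z = Ω z := by
  have h2re : ∀ d : EuclideanSpace ℂ (Fin n), 0 < (inner ℂ ν d : ℂ).re →
      0 < 2 * ((inner ℂ ν d : ℂ)⁻¹).re := by
    intro d hd
    have hne : (inner ℂ ν d : ℂ) ≠ 0 := fun h => by rw [h] at hd; simp at hd
    have hns := Complex.normSq_pos.mpr hne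
    rw [Complex.inv_re]
    have := div_pos hd hns
    linarith
  have hfamily : ∀ c : ℝ, 0 < c → c < 1 → InFamilyS D p ν (fun z => c⁻¹ * u z + 0) := by
    intro c hc0 hc1
    have hcinv : (0:ℝ) < c⁻¹ := inv_pos.mpr hc0
    refine ⟨⟨uscOn_affine hupsh.1 hcinv,
        fun a b => subharmonicOn_affine (hupsh.2 a b) hcinv le_rfl⟩, ?_, ?_⟩
    · intro x hx hxp
      simp only [add_zero]
      by_cases hbot : (𝓝[D] x).NeBot
      · haveI := hbot
        have ht : Tendsto (fun z => c⁻¹ * u z) (𝓝[D] x) (𝓝 0) := by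
          simpa using (hu0 x hx hxp).const_mul c⁻¹
        exact le_of_eq ht.limsup_eq
      · rw [not_neBot] at hbot
        rw [hbot]
        have hset : {a : ℝ | ∀ᶠ z in (⊥ : Filter (EuclideanSpace ℂ (Fin n))),
            c⁻¹ * u z ≤ a} = univ := by
          ext a; simp
        rw [Filter.limsup_eq, hset, Real.sInf_of_not_bddBelow not_bddBelow_univ]
    · intro γ d hγ hγD hγ1 hd hdre
      have hΩcurve := hΩmem.2.2 γ d hγ hγD hγ1 hd hdre
      have hpos := h2re d hdre
      haveI : (𝓝[<] (1:ℝ)).NeBot := by infer_instance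
      have hIoo : Ioo (0:ℝ) 1 ∈ 𝓝[<] (1:ℝ) := Ioo_mem_nhdsLT_of_mem ⟨one_pos, le_refl 1⟩
      have h01 : ∀ᶠ t in 𝓝[<] (1:ℝ), t ∈ Ioo (0:ℝ) 1 := hIoo
      have hγmem : ∀ᶠ t in 𝓝[<] (1:ℝ), γ t ∈ D :=
        h01.mono fun t ht => hγD t ⟨ht.1.le, ht.2⟩
      have hIcc : Icc (0:ℝ) 1 ∈ 𝓝[<] (1:ℝ) := mem_of_superset hIoo Ioo_subset_Icc_self
      have htp : Tendsto γ (𝓝[<] (1:ℝ)) (𝓝[D] p) := by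
        rw [tendsto_nhdsWithin_iff]
        refine ⟨?_, hγmem⟩
        have hcont : ContinuousWithinAt γ (Icc 0 1) 1 :=
          hγ.continuousOn.continuousWithinAt ⟨zero_le_one, le_refl 1⟩
        have h2 := hcont.mono_left (nhdsWithin_le_of_mem hIcc)
        rwa [hγ1] at h2
      have hratio : Tendsto (fun t => u (γ t) / Ω (γ t)) (𝓝[<] (1:ℝ)) (𝓝 1) := huq.comp htp
      have hev : ∀ᶠ t in 𝓝[<] (1:ℝ), u (γ t) / Ω (γ t) ∈ Ioo c 2 :=
        hratio.eventually_mem (Ioo_mem_nhds hc1 one_lt_two)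
      set φ : ℝ → ℝ := fun t => |Ω (γ t)| * (1 - t) with hφ
      set ψ : ℝ → ℝ := fun t => |(fun z => c⁻¹ * u z + 0) (γ t)| * (1 - t) with hψ
      have hbounds : ∀ᶠ t in 𝓝[<] (1:ℝ), φ t ≤ ψ t ∧ ψ t ≤ (c⁻¹ * 2) * φ t := by
        filter_upwards [hγmem, hev, h01] with t htD hte ht01
        have hΩt := hΩneg _ htD
        have hΩne : Ω (γ t) ≠ 0 := ne_of_lt hΩt
        have hrpos : 0 < u (γ t) / Ω (γ t) := lt_trans hc0 hte.1
        have habs : |u (γ t)| = (u (γ t) / Ω (γ t)) * |Ω (γ t)| := by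
          conv_lhs => rw [← div_mul_cancel₀ (u (γ t)) hΩne]
          rw [abs_mul, abs_of_pos hrpos]
        have h1t : (0:ℝ) ≤ 1 - t := by linarith [ht01.2]
        have hA : (0:ℝ) ≤ |Ω (γ t)| := abs_nonneg _
        have habs2 : |c⁻¹ * u (γ t) + 0| = c⁻¹ * |u (γ t)| := by
          rw [add_zero, abs_mul, abs_of_pos hcinv]
        have h1 : c * |Ω (γ t)| ≤ |u (γ t)| := by
          rw [habs]; exact mul_le_mul_of_nonneg_right hte.1.le hA
        have h2 : |u (γ t)| ≤ 2 * |Ω (γ t)| := by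
          rw [habs]; exact mul_le_mul_of_nonneg_right hte.2.le hA
        constructor
        · have h3 : |Ω (γ t)| ≤ c⁻¹ * |u (γ t)| := by
            rw [le_inv_mul_iff₀ hc0]; exact h1
          simp only [hφ, hψ, habs2]
          exact mul_le_mul_of_nonneg_right h3 h1t
        · have h3 : c⁻¹ * |u (γ t)| ≤ c⁻¹ * 2 * |Ω (γ t)| := by
            rw [mul_assoc]; exact mul_le_mul_of_nonneg_left h2 hcinv.le
          simp only [hφ, hψ, habs2]
          calc c⁻¹ * |u (γ t)| * (1 - t) ≤ c⁻¹ * 2 * |Ω (γ t)| * (1 - t) :=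
                mul_le_mul_of_nonneg_right h3 h1t
            _ = c⁻¹ * 2 * (|Ω (γ t)| * (1 - t)) := by ring
      have hφ0 : ∀ᶠ t in 𝓝[<] (1:ℝ), 0 ≤ φ t := by
        filter_upwards [h01] with t ht
        exact mul_nonneg (abs_nonneg _) (by linarith [ht.2])
      have hbdd : BddAbove {a : ℝ | ∀ᶠ t in 𝓝[<] (1:ℝ), a ≤ φ t} := by
        by_contra hnb
        have hz : liminf φ (𝓝[<] (1:ℝ)) = 0 := by
          rw [Filter.liminf_eq]; exact Real.sSup_of_not_bddAbove hnb
        rw [hz] at hΩcurve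
        linarith
      obtain ⟨M, hM⟩ := hbdd
      have hfreq : ∃ᶠ t in 𝓝[<] (1:ℝ), φ t ≤ M + 1 := by
        by_contra hcon
        rw [Filter.not_frequently] at hcon
        have hmem : (M + 1) ∈ {a : ℝ | ∀ᶠ t in 𝓝[<] (1:ℝ), a ≤ φ t} :=
          hcon.mono fun t ht => (not_le.mp ht).le
        have := hM hmem
        linarith
      have hcobdd : (𝓝[<] (1:ℝ)).IsCoboundedUnder (· ≥ ·) ψ := by
        refine ⟨c⁻¹ * 2 * (M + 1), fun a ha => ?_⟩
        rw [Filter.eventually_map] at ha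
        obtain ⟨t, ht1, ht2, ht3⟩ := (hfreq.and_eventually (ha.and hbounds)).exists
        calc a ≤ ψ t := ht2
          _ ≤ c⁻¹ * 2 * φ t := ht3.2
          _ ≤ c⁻¹ * 2 * (M + 1) := mul_le_mul_of_nonneg_left ht1 (by positivity)
      have hbddunder : (𝓝[<] (1:ℝ)).IsBoundedUnder (· ≥ ·) φ :=
        ⟨0, Filter.eventually_map.mpr hφ0⟩
      calc 2 * ((inner ℂ ν d : ℂ)⁻¹).re ≤ liminf φ (𝓝[<] (1:ℝ)) := hΩcurve
        _ ≤ liminf ψ (𝓝[<] (1:ℝ)) :=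
            Filter.liminf_le_liminf (hbounds.mono fun t ht => ht.1) hbddunder hcobdd
  have key1 : ∀ c : ℝ, 0 < c → c < 1 → ∀ z ∈ D, u z ≤ c * Ω z := by
    intro c hc0 hc1 z hz
    have h := hΩmax _ (hfamily c hc0 hc1) z hz
    have h' : c⁻¹ * u z + 0 ≤ Ω z := h
    have h2 : c⁻¹ * u z ≤ Ω z := by linarith
    calc u z = c * (c⁻¹ * u z) := by field_simp
      _ ≤ c * Ω z := mul_le_mul_of_nonneg_left h2 hc0.le
  have hle : ∀ z ∈ D, u z ≤ Ω z := by
    intro z hz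
    refine le_of_forall_pos_le_add fun ε hε => ?_
    have hΩz := hΩneg z hz
    have hεd : 0 < ε / (-Ω z) := div_pos hε (by linarith)
    have hc1 : max (1/2 : ℝ) (1 - ε / (-Ω z)) < 1 := max_lt (by norm_num) (by linarith)
    have hc0 : (0:ℝ) < max (1/2 : ℝ) (1 - ε / (-Ω z)) := lt_max_of_lt_left (by norm_num)
    have h := key1 _ hc0 hc1 z hz
    have h3 : (1 - ε / (-Ω z)) ≤ max (1/2 : ℝ) (1 - ε / (-Ω z)) := le_max_right _ _
    have h4 := mul_le_mul_of_nonpos_right h3 hΩz.le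
    have hne : Ω z ≠ 0 := ne_of_lt hΩz
    have h5 : (1 - ε / (-Ω z)) * Ω z = Ω z + ε := by
      rw [div_neg, sub_neg_eq_add, add_mul, one_mul, div_mul_cancel₀ _ hne]
    linarith
  have key2 : ∀ c : ℝ, 0 < c → c < 1 → ∀ δ : ℝ, 0 < δ → ∀ z ∈ D, Ω z ≤ c * u z + δ := by
    intro c hc0 hc1 δ hδ
    have hcinv : (0:ℝ) < c⁻¹ := inv_pos.mpr hc0
    set B := {z : EuclideanSpace ℂ (Fin n) | z ∈ D ∧ c * u z + δ < Ω z} with hBdef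
    have hBD : B ⊆ D := fun z hz => hz.1
    have hclos : closure B ⊆ D := by
      intro x hx
      by_contra hxD
      have hxDc : x ∈ closure D := closure_mono hBD hx
      have hxfr : x ∈ frontier D := ⟨hxDc, by rwa [hD.interior_eq]⟩
      have hxfreq : ∃ᶠ z in 𝓝 x, z ∈ B := mem_closure_iff_frequently.mp hx
      by_cases hxp : x = p
      · subst hxp
        have h1 : ∀ᶠ z in 𝓝[D] x, u z / Ω z < c⁻¹ :=
          huq.eventually (gt_mem_nhds ((one_lt_inv₀ hc0).mpr hc1))
        rw [eventually_nhdsWithin_iff] at h1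
        obtain ⟨z, hzB, hz1⟩ := (hxfreq.and_eventually h1).exists
        have hzD := hzB.1
        have hΩz := hΩneg z hzD
        have hlt : u z / Ω z < c⁻¹ := hz1 hzD
        have h6 : c⁻¹ * Ω z < u z := (div_lt_iff_of_neg hΩz).mp hlt
        have h7 : Ω z < c * u z := by
          have h8 := mul_lt_mul_of_pos_left h6 hc0
          rwa [← mul_assoc, mul_inv_cancel₀ (ne_of_gt hc0), one_mul] at h8
        have := hzB.2
        linarith
      · have h1 : ∀ᶠ z in 𝓝[D] x, Ω z < δ/2 :=
          (hΩ0 x hxfr hxp).eventually (gt_mem_nhds (by positivity))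
        have h2 : ∀ᶠ z in 𝓝[D] x, -(δ/(2*c)) < u z :=
          (hu0 x hxfr hxp).eventually (lt_mem_nhds (neg_neg_iff_pos.mpr (by positivity)))
        rw [eventually_nhdsWithin_iff] at h1 h2
        obtain ⟨z, hzB, hz1, hz2⟩ := (hxfreq.and_eventually (h1.and h2)).exists
        have hzD := hzB.1
        have hu' := hz2 hzD
        have hΩ' := hz1 hzD
        have h8 : c * (-(δ/(2*c))) < c * u z := mul_lt_mul_of_pos_left hu' hc0
        have h9 : c * (-(δ / (2 * c))) = -(δ/2) := by field_simp
        have := hzB.2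
        linarith
    have hBcpt : IsCompact (closure B) := (hDb.subset hBD).isCompact_closure
    obtain ⟨L, hLcpt, hBL, hLD⟩ := exists_compact_between hBcpt hD hclos
    have hGopen : IsOpen (interior L) := isOpen_interior
    have hGL : closure (interior L) ⊆ L := closure_minimal interior_subset hLcpt.isClosed
    have hGD : closure (interior L) ⊆ D := hGL.trans hLD
    have hGcpt : IsCompact (closure (interior L)) :=
      hLcpt.of_isClosed_subset isClosed_closure hGL
    have hGsubD : interior L ⊆ D := interior_subset.trans hLD
    have hbneg : -δ * c⁻¹ ≤ 0 := by
      have : 0 ≤ δ * c⁻¹ := by positivity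
      nlinarith
    have hvpsh : PshOn (fun z => c⁻¹ * Ω z + (-δ * c⁻¹)) (interior L) := by
      constructor
      · exact (uscOn_affine hΩmem.1.1 hcinv).mono hGsubD
      · intro a b
        exact subharmonicOn_mono (subharmonicOn_affine (hΩmem.1.2 a b) hcinv hbneg)
          (fun ζ hζ => hGsubD hζ)
    have hfr : ∀ x ∈ frontier (interior L),
        limsup (fun z => c⁻¹ * Ω z + (-δ * c⁻¹)) (𝓝[interior L] x) ≤ u x := by
      intro x hxf
      have hxcl : x ∈ closure (interior L) := frontier_subset_closure hxf
      have hxD : x ∈ D := hGD hxcl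
      have hxnG : x ∉ interior L := by
        have h2 := hxf.2
        rw [interior_interior] at h2
        exact h2
      have hxB : x ∉ B := fun hxB => hxnG (hBL (subset_closure hxB))
      have hxbound : Ω x ≤ c * u x + δ := by
        by_contra hcon
        exact hxB ⟨hxD, not_le.mp hcon⟩
      haveI hnebot : (𝓝[interior L] x).NeBot := mem_closure_iff_nhdsWithin_neBot.mp hxcl
      obtain ⟨C, r, hr, hC⟩ := huloc x hxD
      have hlowbd : ∀ᶠ z in 𝓝[interior L] x,
          c⁻¹ * (-C) + (-δ * c⁻¹) ≤ c⁻¹ * Ω z + (-δ * c⁻¹) := by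
        have hball : ∀ᶠ z in 𝓝[interior L] x, z ∈ ball x r :=
          mem_nhdsWithin_of_mem_nhds (ball_mem_nhds x hr)
        filter_upwards [hball, eventually_mem_nhdsWithin] with z hz1 hz2
        have hzD : z ∈ D := hGsubD hz2
        have hCu := hC z ⟨hz1, hzD⟩
        rw [abs_le] at hCu
        have hlo : -C ≤ Ω z := le_trans hCu.1 (hle z hzD)
        have := mul_le_mul_of_nonneg_left hlo hcinv.le
        linarith
      have hcob : (𝓝[interior L] x).IsCoboundedUnder (· ≤ ·)
          (fun z => c⁻¹ * Ω z + (-δ * c⁻¹)) :=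
        Filter.isCoboundedUnder_le_of_eventually_le _ hlowbd
      refine le_of_forall_pos_le_add fun ε hε => ?_
      have husc0 : Ω x < c * (u x + ε) + δ := by nlinarith [mul_pos hc0 hε]
      have husc := hΩmem.1.1 x hxD (c * (u x + ε) + δ) husc0
      have husc' : ∀ᶠ z in 𝓝[interior L] x,
          (fun z => c⁻¹ * Ω z + (-δ * c⁻¹)) z ≤ u x + ε := by
        have h10 := husc.filter_mono (nhdsWithin_mono x hGsubD)
        filter_upwards [h10] with z hz
        have h11 := mul_lt_mul_of_pos_left hz hcinv
        have hcc : c⁻¹ * (c * (u x + ε) + δ) = (u x + ε) + c⁻¹ * δ := by field_simp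
        have hmm : (-δ) * c⁻¹ = -(c⁻¹ * δ) := by ring
        show c⁻¹ * Ω z + (-δ * c⁻¹) ≤ u x + ε
        linarith [h11, hcc, hmm]
      exact Filter.limsup_le_of_le hcob husc'
    have hmain := huMA (interior L) hGopen hGD hGcpt _ hvpsh hfr
    intro z hz
    by_cases hzB : c * u z + δ < Ω z
    · have hzG : z ∈ interior L := hBL (subset_closure ⟨hz, hzB⟩)
      have h12 := hmain z hzG
      have h12' : c⁻¹ * Ω z + (-δ * c⁻¹) ≤ u z := h12
      have h13 := mul_le_mul_of_nonneg_left h12' hc0.le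
      have h14 : c * (c⁻¹ * Ω z + (-δ * c⁻¹)) = Ω z - δ := by field_simp; ring
      linarith
    · exact not_lt.mp hzB
  have hge : ∀ z ∈ D, Ω z ≤ u z := by
    intro z hz
    refine le_of_forall_pos_le_add fun ε hε => ?_
    have huz : u z < 0 := lt_of_le_of_lt (hle z hz) (hΩneg z hz)
    have hεd : 0 < (ε/2) / (-u z) := div_pos (by positivity) (by linarith)
    have hc1 : max (1/2 : ℝ) (1 - (ε/2) / (-u z)) < 1 := max_lt (by norm_num) (by linarith)
    have hc0 : (0:ℝ) < max (1/2 : ℝ) (1 - (ε/2) / (-u z)) := lt_max_of_lt_left (by norm_num)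
    have h := key2 _ hc0 hc1 (ε/2) (by positivity) z hz
    have h3 : (1 - (ε/2) / (-u z)) ≤ max (1/2 : ℝ) (1 - (ε/2) / (-u z)) := le_max_right _ _
    have h4 := mul_le_mul_of_nonpos_right h3 huz.le
    have hne : u z ≠ 0 := ne_of_lt huz
    have h5 : (1 - (ε/2) / (-u z)) * u z = u z + ε/2 := by
      rw [div_neg, sub_neg_eq_add, add_mul, one_mul, div_mul_cancel₀ _ hne]
    linarith
  intro z hz
  exact le_antisymm (hle z hz) (hge z hz)
end

section
/- Let u be a maximal locally bounded plurisubharmonic function on D (bounded strongly convex with smooth boundary) with u < 0, lim_{z→x} u(z) = 0 for all x ∈ ∂D∖{p}, and suppose u ≤ Ω_{D,p} on D while u(z₀) < Ω_{D,p}(z₀) for some z₀. Then for suitable 0 < c < 1 and δ > 0, the open set E = {z ∈ D : Ω_{D,p}(z) > c·u(z) + δ} is nonempty and relatively compact in D, provided lim_{z→p} u(z)/Ω_{D,p}(z) = 1. -/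
open Metric Filter Set Topology

/-- Key compactness step in the uniqueness theorem: if `u ≤ Ω_{D,p}` with strict
inequality somewhere and `u/Ω_{D,p} → 1` at `p`, then for suitable `0 < c < 1`, `δ > 0`
the open set `{z ∈ D : Ω_{D,p}(z) > c·u(z) + δ}` is nonempty and relatively compact
in `D`. -/
theorem stmt15 {n : ℕ} (D : Set (EuclideanSpace ℂ (Fin n)))
    (hD : IsOpen D) (hDn : D.Nonempty) (hDb : Bornology.IsBounded D)
    (hconv : Convex ℝ D) (hsc : IsSmoothStronglyConvex D)
    (p : EuclideanSpace ℂ (Fin n)) (hp : p ∈ frontier D)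
    (Ω : EuclideanSpace ℂ (Fin n) → ℝ)
    (hΩpsh : PshOn Ω D) (hΩneg : ∀ z ∈ D, Ω z < 0)
    (hΩMA : MaximalPshOn Ω D)
    (hΩ0 : ∀ x ∈ frontier D, x ≠ p → Tendsto Ω (𝓝[D] x) (𝓝 0))
    (u : EuclideanSpace ℂ (Fin n) → ℝ)
    (hupsh : PshOn u D)
    (huloc : ∀ z ∈ D, ∃ C : ℝ, ∃ r : ℝ, 0 < r ∧ ∀ w ∈ ball z r ∩ D, |u w| ≤ C)
    (huMA : MaximalPshOn u D)
    (huneg : ∀ z ∈ D, u z < 0)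
    (hu0 : ∀ x ∈ frontier D, x ≠ p → Tendsto u (𝓝[D] x) (𝓝 0))
    (hle : ∀ z ∈ D, u z ≤ Ω z)
    (z₀ : EuclideanSpace ℂ (Fin n)) (hz₀ : z₀ ∈ D) (hlt : u z₀ < Ω z₀)
    (huq : Tendsto (fun z => u z / Ω z) (𝓝[D] p) (𝓝 1)) :
    ∃ c δ : ℝ, 0 < c ∧ c < 1 ∧ 0 < δ ∧
      ({z ∈ D | c * u z + δ < Ω z}).Nonempty ∧
      closure {z ∈ D | c * u z + δ < Ω z} ⊆ D ∧
      IsCompact (closure {z ∈ D | c * u z + δ < Ω z}) := by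
  have huz₀ : u z₀ < 0 := huneg z₀ hz₀
  have hΩz₀ : Ω z₀ < 0 := hΩneg z₀ hz₀
  set q : ℝ := Ω z₀ / u z₀ with hq
  have hq0 : 0 < q := div_pos_of_neg_of_neg hΩz₀ huz₀
  have hq1 : q < 1 := by
    rw [hq, div_lt_one_iff]
    right; right; exact ⟨huz₀, hlt⟩
  set c : ℝ := (q + 1) / 2 with hcdef
  have hc0 : 0 < c := by positivity
  have hc1 : c < 1 := by rw [hcdef]; linarith
  have hcq : q < c := by rw [hcdef]; linarith
  have hcu : c * u z₀ < Ω z₀ := by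
    have h1 : c * u z₀ < q * u z₀ := mul_lt_mul_of_neg_right hcq huz₀
    have hqu : q * u z₀ = Ω z₀ := div_mul_cancel₀ _ (ne_of_lt huz₀)
    linarith
  set δ : ℝ := (Ω z₀ - c * u z₀) / 2 with hδdef
  have hδ0 : 0 < δ := by rw [hδdef]; linarith
  refine ⟨c, δ, hc0, hc1, hδ0, ⟨z₀, hz₀, by rw [hδdef]; linarith⟩, ?_, ?_⟩
  · -- closure ⊆ D
    intro x hx
    set E : Set (EuclideanSpace ℂ (Fin n)) := {z ∈ D | c * u z + δ < Ω z} with hE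
    have hED : E ⊆ D := fun z hz => hz.1
    have hxD : x ∈ closure D := closure_mono hED hx
    by_contra hxnD
    have hxfr : x ∈ frontier D := by
      rw [hD.frontier_eq]; exact ⟨hxD, hxnD⟩
    have hfreq : ∃ᶠ z in 𝓝 x, z ∈ E := mem_closure_iff_frequently.mp hx
    have hnot : ∀ᶠ z in 𝓝 x, z ∉ E := by
      by_cases hxp : x = p
      · subst hxp
        have h1 : ∀ᶠ z in 𝓝[D] x, u z / Ω z < 1 / c := by
          apply huq.eventually_lt_const
          rw [lt_div_iff₀ hc0]; linarith
        rw [eventually_nhdsWithin_iff] at h1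
        filter_upwards [h1] with z hz hzE
        have hzD : z ∈ D := hzE.1
        have hzlt : c * u z + δ < Ω z := hzE.2
        have hΩz : Ω z < 0 := hΩneg z hzD
        have hr : u z / Ω z < 1 / c := hz hzD
        have hcancel : u z / Ω z * Ω z = u z := div_mul_cancel₀ _ (ne_of_lt hΩz)
        have h3 : 1 / c * Ω z < u z := by
          have h4 := mul_lt_mul_of_neg_right hr hΩz
          rwa [hcancel] at h4
        have h5 := mul_lt_mul_of_pos_left h3 hc0
        have h6 : c * (1 / c * Ω z) = Ω z := by field_simp
        linarith
      · have h1 : ∀ᶠ z in 𝓝[D] x, Ω z < δ / 2 :=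
          (hΩ0 x hxfr hxp).eventually_lt_const (by linarith)
        have h2 : ∀ᶠ z in 𝓝[D] x, -(δ / (2 * c)) < u z :=
          (hu0 x hxfr hxp).eventually_const_lt (neg_lt_zero.mpr (by positivity))
        rw [eventually_nhdsWithin_iff] at h1 h2
        filter_upwards [h1, h2] with z hz1 hz2 hzE
        have hzD : z ∈ D := hzE.1
        have hzlt : c * u z + δ < Ω z := hzE.2
        have hu' : -(δ / (2 * c)) < u z := hz2 hzD
        have hΩ' : Ω z < δ / 2 := hz1 hzD
        have : c * u z > c * (-(δ / (2 * c))) := by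
          exact mul_lt_mul_of_pos_left hu' hc0
        have hcc : c * (-(δ / (2 * c))) = -(δ / 2) := by
          field_simp
        linarith [hcc ▸ this]
    exact (hfreq.and_eventually hnot).exists.elim (fun z hz => hz.2 hz.1)
  · -- compactness
    have hb : Bornology.IsBounded {z ∈ D | c * u z + δ < Ω z} :=
      hDb.subset (fun z hz => hz.1)
    exact hb.isCompact_closure
end

section
/- Let r be a smooth defining function for a bounded domain D ⊂ ℂⁿ with smooth boundary (r < 0 on D, r = 0 and dr ≠ 0 on ∂D). Then the (2n-1)-form ω_{∂D} := ((dd^c r)^{n-1} ∧ d^c r / ‖dr‖ⁿ)|_{∂D} does not depend on the choice of the defining function r: if r' = h·r with h smooth and positive near ∂D, then ((dd^c r')^{n-1} ∧ d^c r' / ‖dr'‖ⁿ)|_{∂D} = ((dd^c r)^{n-1} ∧ d^c r / ‖dr‖ⁿ)|_{∂D}. -/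
open Metric Filter Set Topology

variable {m : ℕ}

/-- The 1-form `d^c r = i(∂̄-∂)r`, evaluated on a vector: `d^c r(v) = -dr(iv)`. -/
noncomputable def dcForm (r : EuclideanSpace ℂ (Fin m) → ℝ)
    (x v : EuclideanSpace ℂ (Fin m)) : ℝ :=
  -(fderiv ℝ r x (Complex.I • v))

/-- The 2-form `dd^c r`, evaluated on two vectors. -/
noncomputable def ddcForm (r : EuclideanSpace ℂ (Fin m) → ℝ)
    (x v w : EuclideanSpace ℂ (Fin m)) : ℝ :=
  fderiv ℝ (fun y => dcForm r y w) x v - fderiv ℝ (fun y => dcForm r y v) x w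

/-- The value of the `(2n+1)`-form `(dd^c r)^n ∧ d^c r` on ℂ^{n+1} at `x` on the vectors
`v_0, …, v_{2n}` (the standard antisymmetrized sum over permutations). -/
noncomputable def boundaryFormVal (n : ℕ) (r : EuclideanSpace ℂ (Fin (n+1)) → ℝ)
    (x : EuclideanSpace ℂ (Fin (n+1))) (v : Fin (2*n+1) → EuclideanSpace ℂ (Fin (n+1))) : ℝ :=
  ∑ σ : Equiv.Perm (Fin (2*n+1)), ((Equiv.Perm.sign σ : ℤ) : ℝ) *
    ((∏ i : Fin n,
        ddcForm r x (v (σ ⟨2*i.1, by have := i.2; omega⟩))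
          (v (σ ⟨2*i.1+1, by have := i.2; omega⟩))) *
      dcForm r x (v (σ ⟨2*n, by omega⟩)))

/- ### Auxiliary combinatorial lemmas -/

def e0 (n : ℕ) (i : Fin n) : Fin (2*n+1) := ⟨2*i.1, by have := i.2; omega⟩
def e1 (n : ℕ) (i : Fin n) : Fin (2*n+1) := ⟨2*i.1+1, by have := i.2; omega⟩
def eM (n : ℕ) : Fin (2*n+1) := ⟨2*n, by omega⟩

lemma e0_ne_e1 {n : ℕ} (i j : Fin n) : e0 n i ≠ e1 n j := by
  simp only [e0, e1, ne_eq, Fin.mk.injEq]; omega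
lemma e0_ne_eM {n : ℕ} (i : Fin n) : e0 n i ≠ eM n := by
  simp only [e0, eM, ne_eq, Fin.mk.injEq]; have := i.2; omega
lemma e1_ne_eM {n : ℕ} (i : Fin n) : e1 n i ≠ eM n := by
  simp only [e1, eM, ne_eq, Fin.mk.injEq]; omega
lemma e1_ne_e1 {n : ℕ} {i j : Fin n} (hij : i ≠ j) : e1 n i ≠ e1 n j := by
  simp only [e1, ne_eq, Fin.mk.injEq]
  exact fun hc => hij (Fin.ext (by omega))
lemma e0_ne_e0 {n : ℕ} {i j : Fin n} (hij : i ≠ j) : e0 n i ≠ e0 n j := by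
  simp only [e0, ne_eq, Fin.mk.injEq]
  exact fun hc => hij (Fin.ext (by omega))

/-- Antisymmetrized sums vanish when the same linear functional occupies two slots. -/
lemma alg_key {N : ℕ} (c : Fin N → ℝ) (q : Equiv.Perm (Fin N) → ℝ)
    (b m : Fin N) (hbm : b ≠ m)
    (hq : ∀ σ : Equiv.Perm (Fin N), q (σ * Equiv.swap b m) = q σ) :
    ∑ σ : Equiv.Perm (Fin N), ((Equiv.Perm.sign σ : ℤ) : ℝ) * (q σ * (c (σ b) * c (σ m))) = 0 := by
  set τ := Equiv.swap b m with hτ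
  set f : Equiv.Perm (Fin N) → ℝ :=
    fun σ => ((Equiv.Perm.sign σ : ℤ) : ℝ) * (q σ * (c (σ b) * c (σ m))) with hf
  have key : ∀ σ : Equiv.Perm (Fin N), f (σ * τ) = -f σ := by
    intro σ
    have hs : ((Equiv.Perm.sign (σ * τ) : ℤ) : ℝ) = -((Equiv.Perm.sign σ : ℤ) : ℝ) := by
      rw [hτ, Equiv.Perm.sign_mul, Equiv.Perm.sign_swap hbm]; push_cast; ring
    have hb : (σ * τ) b = σ m := by simp [hτ, Equiv.Perm.mul_apply]
    have hm : (σ * τ) m = σ b := by simp [hτ, Equiv.Perm.mul_apply]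
    simp only [hf, hs, hb, hm, hq]; ring
  have h2 : ∑ σ : Equiv.Perm (Fin N), f σ = ∑ σ : Equiv.Perm (Fin N), f (σ * τ) :=
    (Equiv.sum_comp (Equiv.mulRight τ) f).symm
  have h3 : ∑ σ : Equiv.Perm (Fin N), f σ = -∑ σ : Equiv.Perm (Fin N), f σ := by
    nth_rewrite 1 [h2]; simp only [key, Finset.sum_neg_distrib]
  linarith

/-- The main multilinear-algebra identity: adding the `dh ∧ d^c r`-type terms to each
`dd^c r` slot changes the antisymmetrized sum only by the overall factor `hx^(n+1)`. -/
lemma alg_main (n : ℕ) (A : Fin (2*n+1) → Fin (2*n+1) → ℝ)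
    (c d : Fin (2*n+1) → ℝ) (hx : ℝ) :
    ∑ σ : Equiv.Perm (Fin (2*n+1)), ((Equiv.Perm.sign σ : ℤ) : ℝ) *
      ((∏ i : Fin n,
          ((d (σ (e0 n i)) * c (σ (e1 n i)) - d (σ (e1 n i)) * c (σ (e0 n i)))
           + hx * A (σ (e0 n i)) (σ (e1 n i)))) *
        (hx * c (σ (eM n)))) =
    hx^(n+1) * ∑ σ : Equiv.Perm (Fin (2*n+1)), ((Equiv.Perm.sign σ : ℤ) : ℝ) *
      ((∏ i : Fin n, A (σ (e0 n i)) (σ (e1 n i))) * c (σ (eM n))) := by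
  classical
  set G : Equiv.Perm (Fin (2*n+1)) → Fin n → ℝ :=
    fun σ i => d (σ (e0 n i)) * c (σ (e1 n i)) - d (σ (e1 n i)) * c (σ (e0 n i)) with hG
  set F : Equiv.Perm (Fin (2*n+1)) → Fin n → ℝ :=
    fun σ i => hx * A (σ (e0 n i)) (σ (e1 n i)) with hF
  have step1 : ∑ σ : Equiv.Perm (Fin (2*n+1)), ((Equiv.Perm.sign σ : ℤ) : ℝ) *
      ((∏ i : Fin n, (G σ i + F σ i)) * (hx * c (σ (eM n)))) =
      ∑ t ∈ (Finset.univ : Finset (Fin n)).powerset, ∑ σ : Equiv.Perm (Fin (2*n+1)),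
        ((Equiv.Perm.sign σ : ℤ) : ℝ) *
          (((∏ i ∈ t, G σ i) * ∏ i ∈ Finset.univ \ t, F σ i) * (hx * c (σ (eM n)))) := by
    rw [Finset.sum_comm]
    refine Finset.sum_congr rfl fun σ _ => ?_
    rw [Finset.prod_add, Finset.sum_mul, Finset.mul_sum]
  rw [step1]
  rw [Finset.sum_eq_single_of_mem (∅ : Finset (Fin n)) (Finset.empty_mem_powerset _)]
  · rw [Finset.mul_sum]
    refine Finset.sum_congr rfl fun σ _ => ?_
    rw [Finset.prod_empty, Finset.sdiff_empty, hF]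
    show _ = _
    rw [Finset.prod_mul_distrib, Finset.prod_const, Finset.card_univ, Fintype.card_fin]
    ring
  · intro t _ ht
    obtain ⟨i0, hi0⟩ := Finset.nonempty_iff_ne_empty.mpr ht
    have split : ∀ σ : Equiv.Perm (Fin (2*n+1)),
        ((Equiv.Perm.sign σ : ℤ) : ℝ) *
          (((∏ i ∈ t, G σ i) * ∏ i ∈ Finset.univ \ t, F σ i) * (hx * c (σ (eM n)))) =
        ((Equiv.Perm.sign σ : ℤ) : ℝ) *
          ((hx * d (σ (e0 n i0)) * ((∏ i ∈ t.erase i0, G σ i) * ∏ i ∈ Finset.univ \ t, F σ i)) *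
            (c (σ (e1 n i0)) * c (σ (eM n)))) -
        ((Equiv.Perm.sign σ : ℤ) : ℝ) *
          ((hx * d (σ (e1 n i0)) * ((∏ i ∈ t.erase i0, G σ i) * ∏ i ∈ Finset.univ \ t, F σ i)) *
            (c (σ (e0 n i0)) * c (σ (eM n)))) := by
      intro σ
      rw [← Finset.mul_prod_erase t (G σ) hi0]
      simp only [hG]
      ring
    rw [Finset.sum_congr rfl fun σ _ => split σ, Finset.sum_sub_distrib]
    have fixR : ∀ (b : Fin (2*n+1)), b ≠ eM n → (∀ i : Fin n, i ≠ i0 → e0 n i ≠ b ∧ e1 n i ≠ b) →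
        ∀ σ : Equiv.Perm (Fin (2*n+1)),
        ((∏ i ∈ t.erase i0, G (σ * Equiv.swap b (eM n)) i) *
          ∏ i ∈ Finset.univ \ t, F (σ * Equiv.swap b (eM n)) i) =
        ((∏ i ∈ t.erase i0, G σ i) * ∏ i ∈ Finset.univ \ t, F σ i) := by
      intro b hbM hb σ
      have fix : ∀ j : Fin (2*n+1), j ≠ b → j ≠ eM n → (σ * Equiv.swap b (eM n)) j = σ j :=
        fun j h1 h2 => by rw [Equiv.Perm.mul_apply, Equiv.swap_apply_of_ne_of_ne h1 h2]
      congr 1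
      · refine Finset.prod_congr rfl fun i hi => ?_
        have hii0 : i ≠ i0 := (Finset.mem_erase.mp hi).1
        simp only [hG]
        rw [fix _ (hb i hii0).1 (e0_ne_eM i), fix _ (hb i hii0).2 (e1_ne_eM i)]
      · refine Finset.prod_congr rfl fun i hi => ?_
        have hii0 : i ≠ i0 := fun hc => ((Finset.mem_sdiff.mp hi).2 (hc ▸ hi0))
        simp only [hF]
        rw [fix _ (hb i hii0).1 (e0_ne_eM i), fix _ (hb i hii0).2 (e1_ne_eM i)]
    have z1 : ∑ σ : Equiv.Perm (Fin (2*n+1)), ((Equiv.Perm.sign σ : ℤ) : ℝ) *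
        ((hx * d (σ (e0 n i0)) * ((∏ i ∈ t.erase i0, G σ i) * ∏ i ∈ Finset.univ \ t, F σ i)) *
          (c (σ (e1 n i0)) * c (σ (eM n)))) = 0 := by
      apply alg_key c _ (e1 n i0) (eM n) (e1_ne_eM i0)
      intro σ
      have fix : ∀ j : Fin (2*n+1), j ≠ e1 n i0 → j ≠ eM n →
          (σ * Equiv.swap (e1 n i0) (eM n)) j = σ j :=
        fun j h1 h2 => by rw [Equiv.Perm.mul_apply, Equiv.swap_apply_of_ne_of_ne h1 h2]
      rw [fix _ (e0_ne_e1 i0 i0) (e0_ne_eM i0),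
        fixR (e1 n i0) (e1_ne_eM i0) (fun i hii0 => ⟨e0_ne_e1 i i0, e1_ne_e1 hii0⟩) σ]
    have z2 : ∑ σ : Equiv.Perm (Fin (2*n+1)), ((Equiv.Perm.sign σ : ℤ) : ℝ) *
        ((hx * d (σ (e1 n i0)) * ((∏ i ∈ t.erase i0, G σ i) * ∏ i ∈ Finset.univ \ t, F σ i)) *
          (c (σ (e0 n i0)) * c (σ (eM n)))) = 0 := by
      apply alg_key c _ (e0 n i0) (eM n) (e0_ne_eM i0)
      intro σ
      have fix : ∀ j : Fin (2*n+1), j ≠ e0 n i0 → j ≠ eM n →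
          (σ * Equiv.swap (e0 n i0) (eM n)) j = σ j :=
        fun j h1 h2 => by rw [Equiv.Perm.mul_apply, Equiv.swap_apply_of_ne_of_ne h1 h2]
      rw [fix _ (Ne.symm (e0_ne_e1 i0 i0)) (e1_ne_eM i0),
        fixR (e0 n i0) (e0_ne_eM i0) (fun i hii0 => ⟨e0_ne_e0 hii0, Ne.symm (e0_ne_e1 i0 i)⟩) σ]
    rw [z1, z2, sub_zero]

/-- Independence of `ω_{∂D} = ((dd^c r)^n ∧ d^c r)/‖dr‖^{n+1}|_{∂D}` of the chosen
defining function: if `r' = h·r` near `∂D` with `h` smooth and positive, the two forms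
agree on all tuples of vectors tangent to `∂D`. -/
theorem stmt17 {n : ℕ} (D : Set (EuclideanSpace ℂ (Fin (n+1))))
    (r r' h : EuclideanSpace ℂ (Fin (n+1)) → ℝ) (U : Set (EuclideanSpace ℂ (Fin (n+1))))
    (hDb : Bornology.IsBounded D)
    (hr : ContDiff ℝ (⊤ : ℕ∞) r) (hDr : D = {x | r x < 0}) (hfr : frontier D = {x | r x = 0})
    (hgrad : ∀ x ∈ frontier D, fderiv ℝ r x ≠ 0)
    (hU : IsOpen U) (hUfr : frontier D ⊆ U)
    (hh : ContDiffOn ℝ (⊤ : ℕ∞) h U) (hhpos : ∀ x ∈ U, 0 < h x)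
    (hr' : ContDiffOn ℝ (⊤ : ℕ∞) r' U) (hrr' : ∀ x ∈ U, r' x = h x * r x) :
    ∀ x ∈ frontier D, ∀ v : Fin (2*n+1) → EuclideanSpace ℂ (Fin (n+1)),
      (∀ i, fderiv ℝ r x (v i) = 0) →
      boundaryFormVal n r' x v / ‖fderiv ℝ r' x‖ ^ (n+1) =
      boundaryFormVal n r x v / ‖fderiv ℝ r x‖ ^ (n+1) := by
  intro x hx v hv
  have hxU : x ∈ U := hUfr hx
  have hrx : r x = 0 := by rw [hfr] at hx; exact hx
  have hrd : Differentiable ℝ r := hr.differentiable (by simp)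
  have hhd : ∀ y ∈ U, DifferentiableAt ℝ h y := fun y hy =>
    (hh.differentiableOn (by simp)).differentiableAt (hU.mem_nhds hy)
  have hfr'U : ∀ y ∈ U, fderiv ℝ r' y = h y • fderiv ℝ r y + r y • fderiv ℝ h y := by
    intro y hy
    have hev : r' =ᶠ[nhds y] fun z => h z * r z :=
      Filter.eventuallyEq_of_mem (hU.mem_nhds hy) fun z hz => hrr' z hz
    rw [hev.fderiv_eq, fderiv_fun_mul (hhd y hy) (hrd y)]
  have hfr'x : fderiv ℝ r' x = h x • fderiv ℝ r x := by
    rw [hfr'U x hxU, hrx, zero_smul, add_zero]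
  have hdcU : ∀ w, ∀ y ∈ U, dcForm r' y w = h y * dcForm r y w + r y * dcForm h y w := by
    intro w y hy
    simp only [dcForm, hfr'U y hy, ContinuousLinearMap.add_apply, ContinuousLinearMap.smul_apply,
      smul_eq_mul]
    ring
  have hdcx : ∀ w, dcForm r' x w = h x * dcForm r x w := by
    intro w
    rw [hdcU w x hxU, hrx, zero_mul, add_zero]
  have hdr2 : Differentiable ℝ (fderiv ℝ r) := (hr.fderiv_right (m := 1) (WithTop.coe_le_coe.mpr le_top)).differentiable one_ne_zero
  have hdcr_diff : ∀ w, DifferentiableAt ℝ (fun y => dcForm r y w) x := fun w =>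
    ((hdr2 x).clm_apply (differentiableAt_const _)).neg
  have hdh2 : ∀ y ∈ U, DifferentiableAt ℝ (fderiv ℝ h) y := fun y hy =>
    (((hh.fderiv_of_isOpen (m := 1) hU (WithTop.coe_le_coe.mpr le_top)).differentiableOn one_ne_zero)).differentiableAt (hU.mem_nhds hy)
  have hdch_diff : ∀ w, DifferentiableAt ℝ (fun y => dcForm h y w) x := fun w =>
    ((hdh2 x hxU).clm_apply (differentiableAt_const _)).neg
  have dstep : ∀ w u, fderiv ℝ r x u = 0 →
      fderiv ℝ (fun y => dcForm r' y w) x u =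
        h x * (fderiv ℝ (fun y => dcForm r y w) x u) + dcForm r x w * (fderiv ℝ h x u) := by
    intro w u hu
    have hev : (fun y => dcForm r' y w) =ᶠ[nhds x]
        (fun y => h y * dcForm r y w + r y * dcForm h y w) :=
      Filter.eventuallyEq_of_mem (hU.mem_nhds hxU) fun z hz => hdcU w z hz
    rw [hev.fderiv_eq]
    rw [fderiv_fun_add ((hhd x hxU).fun_mul (hdcr_diff w)) ((hrd x).fun_mul (hdch_diff w)),
      ContinuousLinearMap.add_apply,
      fderiv_fun_mul (hhd x hxU) (hdcr_diff w), fderiv_fun_mul (hrd x) (hdch_diff w),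
      ContinuousLinearMap.add_apply, ContinuousLinearMap.add_apply,
      ContinuousLinearMap.smul_apply, ContinuousLinearMap.smul_apply,
      ContinuousLinearMap.smul_apply, ContinuousLinearMap.smul_apply]
    rw [hrx, hu]
    simp only [smul_eq_mul]
    ring
  have Hddc : ∀ a b : Fin (2*n+1), ddcForm r' x (v a) (v b) =
      (fderiv ℝ h x (v a) * dcForm r x (v b) - fderiv ℝ h x (v b) * dcForm r x (v a))
      + h x * ddcForm r x (v a) (v b) := by
    intro a b
    unfold ddcForm
    rw [dstep (v b) (v a) (hv a), dstep (v a) (v b) (hv b)]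
    ring
  -- the value identity
  have hval : boundaryFormVal n r' x v = (h x)^(n+1) * boundaryFormVal n r x v := by
    unfold boundaryFormVal
    simp only [Hddc, hdcx]
    exact alg_main n (fun a b => ddcForm r x (v a) (v b)) (fun a => dcForm r x (v a))
      (fun a => fderiv ℝ h x (v a)) (h x)
  -- the norm identity
  have hpos : 0 < h x := hhpos x hxU
  have hnorm : ‖fderiv ℝ r' x‖ = h x * ‖fderiv ℝ r x‖ := by
    rw [hfr'x, norm_smul, Real.norm_eq_abs, abs_of_pos hpos]
  rw [hval, hnorm, mul_pow]
  exact mul_div_mul_left _ _ (pow_ne_zero _ (ne_of_gt hpos))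
end
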